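/- arXiv:1602.06081 — 8 statements merged into one kernel-verified Lean document; each statement's English description precedes it below -/
import Mathlib

section
/- For every 0 < ε < 1 and every β > 0, the sequence c_n satisfies lim_{n→∞} [ 2α(ε)·( n·β·β_c(ε) − log c_n ) − log(β_c(ε)²·n/2) − log(4π) ] = 0; equivalently, c_n = exp{ n·β·β_c(ε) − (1/(2α(ε)))·( log(β_c(ε)²·n/2) + log(4π) + o(1) ) }. -/
/-!
Put `a n = β_c √n` and `b n = log (c n) / (β √n)`. Since `-H_n(x) / √n` is standard Gaussian
and `τ_n(x) ≥ c n` means `-H_n(x) / √n ≥ b n`, the defining equation of `c n` says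
`∫_{b n}^∞ e^{-x²/2} dx = √(2π) e^{-(a n)²/2}`. The Mills ratio bounds
`t² / (1 + t²) ≤ t e^{t²/2} ∫_t^∞ e^{-x²/2} dx ≤ 1` turn this into
`(a n)² - (b n)² - 2 log (b n) → log 2π`, which forces `a n - b n → 0` and
`log (a n) - log (b n) → 0`. The quantity in the theorem is
`((a n)² - (b n)² - 2 log (b n) - log 2π) + (a n - b n)² + 2 (log (b n) - log (a n))`.
-/

open MeasureTheory ProbabilityTheory Filter Real Set Topology
open scoped NNReal

noncomputable def gaussTail (t : ℝ) : ℝ := ∫ x in Ioi t, exp (-x ^ 2 / 2)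

lemma integrable_exp_neg_sq_div_two : Integrable fun x : ℝ => exp (-x ^ 2 / 2) := by
  simpa [neg_div, div_eq_inv_mul] using integrable_exp_neg_mul_sq (b := 1 / 2) (by norm_num)

lemma integrable_mul_exp_neg_sq_div_two : Integrable fun x : ℝ => x * exp (-x ^ 2 / 2) := by
  simpa [neg_div, div_eq_inv_mul] using integrable_mul_exp_neg_mul_sq (b := 1 / 2) (by norm_num)

lemma hasDerivAt_exp_neg_sq_div_two (x : ℝ) :
    HasDerivAt (fun y => exp (-y ^ 2 / 2)) (-x * exp (-x ^ 2 / 2)) x := by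
  have h : HasDerivAt (fun y : ℝ => -y ^ 2 / 2) (-x) x :=
    (((hasDerivAt_pow 2 x).neg).div_const 2).congr_deriv (by ring)
  simpa [mul_comm] using h.exp

lemma tendsto_exp_neg_sq_div_two : Tendsto (fun x : ℝ => exp (-x ^ 2 / 2)) atTop (𝓝 0) :=
  tendsto_exp_atBot.comp <|
    (tendsto_neg_atTop_atBot.comp (tendsto_pow_atTop two_ne_zero)).atBot_div_const two_pos

lemma setIntegral_Ioi_le_neg_of_hasDerivAt {f f' g : ℝ → ℝ} {t : ℝ}
    (hf : ∀ x ∈ Ici t, HasDerivAt f (f' x) x) (hf' : IntegrableOn f' (Ioi t))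
    (hlim : Tendsto f atTop (𝓝 0)) (hg : IntegrableOn g (Ioi t))
    (hle : ∀ x ∈ Ioi t, g x ≤ f' x) : ∫ x in Ioi t, g x ≤ -f t := by
  rw [← zero_sub, ← integral_Ioi_of_hasDerivAt_of_tendsto' hf hf' hlim]
  exact setIntegral_mono_on hg hf' measurableSet_Ioi hle

lemma neg_le_setIntegral_Ioi_of_hasDerivAt {f f' g : ℝ → ℝ} {t : ℝ}
    (hf : ∀ x ∈ Ici t, HasDerivAt f (f' x) x) (hf' : IntegrableOn f' (Ioi t))
    (hlim : Tendsto f atTop (𝓝 0)) (hg : IntegrableOn g (Ioi t))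
    (hle : ∀ x ∈ Ioi t, f' x ≤ g x) : -f t ≤ ∫ x in Ioi t, g x := by
  rw [← zero_sub, ← integral_Ioi_of_hasDerivAt_of_tendsto' hf hf' hlim]
  exact setIntegral_mono_on hf' hg measurableSet_Ioi hle

lemma gaussTail_pos (t : ℝ) : 0 < gaussTail t := by
  rw [gaussTail, setIntegral_pos_iff_support_of_nonneg_ae
    (.of_forall fun _ => (exp_pos _).le) integrable_exp_neg_sq_div_two.integrableOn]
  simp [Function.support, exp_ne_zero]

lemma gaussTail_antitone : Antitone gaussTail := fun _ _ hst =>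
  setIntegral_mono_set integrable_exp_neg_sq_div_two.integrableOn
    (.of_forall fun _ => (exp_pos _).le) (Ioi_subset_Ioi hst).eventuallyLE

lemma gaussTail_le_exp_div {t : ℝ} (ht : 0 < t) : gaussTail t ≤ exp (-t ^ 2 / 2) / t := by
  have key := setIntegral_Ioi_le_neg_of_hasDerivAt (t := t) (f := fun x => -exp (-x ^ 2 / 2) / t)
    (f' := fun x => x * exp (-x ^ 2 / 2) / t) (g := fun x => exp (-x ^ 2 / 2))
    (fun x _ => ((hasDerivAt_exp_neg_sq_div_two x).neg.div_const t).congr_deriv (by ring))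
    (integrable_mul_exp_neg_sq_div_two.div_const t).integrableOn
    (by simpa using (tendsto_exp_neg_sq_div_two.neg).div_const t)
    integrable_exp_neg_sq_div_two.integrableOn
    (fun x hx => by
      rw [le_div_iff₀ ht]
      nlinarith [exp_pos (-x ^ 2 / 2), mem_Ioi.1 hx])
  rwa [neg_div, neg_neg] at key

lemma exp_mul_div_one_add_sq_le_gaussTail (t : ℝ) :
    exp (-t ^ 2 / 2) * (t / (1 + t ^ 2)) ≤ gaussTail t := by
  have hpos : ∀ x : ℝ, 0 < 1 + x ^ 2 := fun x => by positivity
  have hderiv (x : ℝ) : HasDerivAt (fun y => -(exp (-y ^ 2 / 2) * (y / (1 + y ^ 2))))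
      ((1 - 2 / (1 + x ^ 2) ^ 2) * exp (-x ^ 2 / 2)) x := by
    have hq : HasDerivAt (fun y => y / (1 + y ^ 2)) ((1 - x ^ 2) / (1 + x ^ 2) ^ 2) x :=
      ((hasDerivAt_id' x).div ((hasDerivAt_pow 2 x).const_add 1) (hpos x).ne').congr_deriv
        (by ring)
    refine ((hasDerivAt_exp_neg_sq_div_two x).mul hq).neg.congr_deriv ?_
    field_simp
    ring
  have hbound (x : ℝ) : |1 - 2 / (1 + x ^ 2) ^ 2| ≤ 1 := by
    have h1 : 1 ≤ (1 + x ^ 2) ^ 2 := one_le_pow₀ (by nlinarith)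
    have h2 : 2 / (1 + x ^ 2) ^ 2 ≤ 2 := div_le_self (by norm_num) h1
    rw [abs_le]
    constructor <;> linarith [div_nonneg zero_le_two (pow_nonneg (hpos x).le 2)]
  have hint : Integrable fun x : ℝ => (1 - 2 / (1 + x ^ 2) ^ 2) * exp (-x ^ 2 / 2) := by
    refine integrable_exp_neg_sq_div_two.mono' ?_ (.of_forall fun x => ?_)
    · exact (Continuous.aestronglyMeasurable (by
        have := fun x => (pow_pos (hpos x) 2).ne'
        fun_prop (disch := assumption)))
    · rw [norm_mul, norm_of_nonneg (exp_pos _).le]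
      exact mul_le_of_le_one_left (exp_pos _).le (hbound x)
  have hlim : Tendsto (fun y => -(exp (-y ^ 2 / 2) * (y / (1 + y ^ 2)))) atTop (𝓝 0) := by
    have hprod : Tendsto (fun y => exp (-y ^ 2 / 2) * (y / (1 + y ^ 2))) atTop (𝓝 0) := by
      refine squeeze_zero' ?_ ?_ tendsto_exp_neg_sq_div_two
      · filter_upwards [eventually_ge_atTop 0] with y hy
        have := hpos y
        positivity
      · filter_upwards with y
        refine mul_le_of_le_one_right (exp_pos _).le ((div_le_one (hpos y)).2 ?_)
        nlinarith [sq_nonneg (y - 1)]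
    simpa using hprod.neg
  have key := neg_le_setIntegral_Ioi_of_hasDerivAt (t := t) (fun x _ => hderiv x)
    hint.integrableOn hlim integrable_exp_neg_sq_div_two.integrableOn
    (fun x _ => mul_le_of_le_one_left (exp_pos _).le (by
      linarith [div_nonneg zero_le_two (pow_nonneg (hpos x).le 2)]))
  rw [neg_neg] at key
  exact key

lemma tendsto_mul_exp_mul_gaussTail :
    Tendsto (fun t => t * exp (t ^ 2 / 2) * gaussTail t) atTop (𝓝 1) := by
  have hexp (t : ℝ) : exp (t ^ 2 / 2) * exp (-t ^ 2 / 2) = 1 := by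
    rw [← exp_add]; ring_nf; exact exp_zero
  have hlower : Tendsto (fun t : ℝ => 1 - (1 + t ^ 2)⁻¹) atTop (𝓝 1) := by
    simpa using tendsto_const_nhds.sub <| tendsto_inv_atTop_zero.comp <|
      tendsto_atTop_add_const_left _ 1 (tendsto_pow_atTop (α := ℝ) two_ne_zero)
  refine tendsto_of_tendsto_of_tendsto_of_le_of_le' hlower tendsto_const_nhds ?_ ?_
  · filter_upwards [eventually_gt_atTop 0] with t ht
    have h := mul_le_mul_of_nonneg_left (exp_mul_div_one_add_sq_le_gaussTail t)
      (by positivity : 0 ≤ t * exp (t ^ 2 / 2))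
    have hpos : 0 < 1 + t ^ 2 := by positivity
    calc 1 - (1 + t ^ 2)⁻¹
        = t * (t / (1 + t ^ 2)) * (exp (t ^ 2 / 2) * exp (-t ^ 2 / 2)) := by
          rw [hexp]; field_simp; ring
      _ = t * exp (t ^ 2 / 2) * (exp (-t ^ 2 / 2) * (t / (1 + t ^ 2))) := by ring
      _ ≤ _ := h
  · filter_upwards [eventually_gt_atTop 0] with t ht
    calc t * exp (t ^ 2 / 2) * gaussTail t
        ≤ t * exp (t ^ 2 / 2) * (exp (-t ^ 2 / 2) / t) :=
          mul_le_mul_of_nonneg_left (gaussTail_le_exp_div ht) (by positivity)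
      _ = exp (t ^ 2 / 2) * exp (-t ^ 2 / 2) * (t / t) := by ring
      _ = 1 := by rw [hexp, div_self ht.ne', one_mul]

lemma tendsto_log_gaussTail_add_sq_div_two_add_log :
    Tendsto (fun t => log (gaussTail t) + t ^ 2 / 2 + log t) atTop (𝓝 0) := by
  have h := ((continuousAt_log one_ne_zero).tendsto.comp tendsto_mul_exp_mul_gaussTail)
  rw [log_one] at h
  refine h.congr' ?_
  filter_upwards [eventually_gt_atTop 0] with t ht
  rw [Function.comp_apply, log_mul (by positivity) (gaussTail_pos t).ne',
    log_mul ht.ne' (exp_pos _).ne', log_exp]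
  ring

lemma tendsto_atTop_of_tendsto_gaussTail {α : Type*} {l : Filter α} {u : α → ℝ}
    (h : Tendsto (fun n => gaussTail (u n)) l (𝓝 0)) : Tendsto u l atTop :=
  tendsto_atTop.2 fun M => (h.eventually_lt_const (gaussTail_pos M)).mono
    fun _ hn => (gaussTail_antitone.reflect_lt hn).le

lemma gaussianReal_map_neg_div_sqrt {v : ℝ≥0} (hv : v ≠ 0) :
    (gaussianReal 0 v).map (fun x => -x / √v) = gaussianReal 0 1 := by
  have h := gaussianReal_map_const_mul (μ := 0) (v := v) (-(√(v : ℝ))⁻¹)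
  have hv' : (0 : ℝ) < v := by positivity
  rw [mul_zero] at h
  convert h using 2
  · ext x; ring
  · ext; simp [inv_pow, sq_sqrt hv'.le, hv'.ne']

lemma toReal_gaussianReal_Ici (t : ℝ) :
    (gaussianReal 0 1 (Ici t)).toReal = gaussTail t / √(2 * π) := by
  rw [gaussianReal_apply_eq_integral 0 one_ne_zero, ENNReal.toReal_ofReal
    (setIntegral_nonneg measurableSet_Ici fun x _ => gaussianPDFReal_nonneg 0 1 x),
    integral_Ici_eq_integral_Ioi, gaussTail, ← integral_div]
  congr with x
  simp [gaussianPDFReal]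
  ring

lemma toReal_measure_le_exp_neg_mul {Ω : Type*} [MeasurableSpace Ω] {P : Measure Ω}
    {X : Ω → ℝ} {v : ℝ≥0} (hv : v ≠ 0) (hX : P.map X = gaussianReal 0 v)
    {β c : ℝ} (hβ : 0 < β) (hc : 0 < c) :
    (P {ω | c ≤ exp (-β * X ω)}).toReal = gaussTail (log c / (β * √v)) / √(2 * π) := by
  have hXm : AEMeasurable X P := .of_map_ne_zero (by simp [hX, NeZero.ne])
  have hv' : (0 : ℝ) < √v := by positivity
  have hset : {ω | c ≤ exp (-β * X ω)} =
      X ⁻¹' ((fun x => -x / √v) ⁻¹' Ici (log c / (β * √v))) := by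
    ext ω
    simp only [mem_ofPred_eq, mem_preimage, mem_Ici]
    rw [← log_le_iff_le_exp hc, div_le_div_iff₀ (by positivity) hv']
    constructor <;> intro h <;> nlinarith
  have hmeas : Measurable fun x : ℝ => -x / √v := by fun_prop
  rw [hset, ← Measure.map_apply_of_aemeasurable hXm (hmeas measurableSet_Ici),
    ← Measure.map_apply hmeas measurableSet_Ici, hX, gaussianReal_map_neg_div_sqrt hv,
    toReal_gaussianReal_Ici]

section Asymptotics

variable {α : Type*} {l : Filter α} {a b : α → ℝ}

lemma tendsto_sub_of_tendsto_sq_sub_sq_sub_log {L : ℝ} (ha : ∀ᶠ x in l, 0 ≤ a x)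
    (hb : Tendsto b l atTop) (h : Tendsto (fun x => a x ^ 2 - b x ^ 2 - 2 * log (b x)) l (𝓝 L)) :
    Tendsto (fun x => a x - b x) l (𝓝 0) := by
  have hlogb : Tendsto (fun x => log (b x)) l atTop := tendsto_log_atTop.comp hb
  have hsq : Tendsto (fun x => a x ^ 2 - b x ^ 2) l atTop :=
    (h.add_atTop (hlogb.const_mul_atTop two_pos)).congr fun x => by ring
  have hlogb_div : Tendsto (fun x => log (b x) / b x) l (𝓝 0) :=
    isLittleO_log_id_atTop.tendsto_div_nhds_zero.comp hb
  have hdiv : Tendsto (fun x => (a x ^ 2 - b x ^ 2) / b x) l (𝓝 0) := by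
    have := (h.div_atTop hb).add (hlogb_div.const_mul 2)
    rw [mul_zero, add_zero] at this
    refine this.congr' ?_
    filter_upwards [hb.eventually_gt_atTop 0] with x hx
    field_simp
    ring
  have hle : ∀ᶠ x in l, 0 ≤ a x - b x ∧ a x - b x ≤ (a x ^ 2 - b x ^ 2) / b x := by
    filter_upwards [ha, hb.eventually_gt_atTop 0, hsq.eventually_ge_atTop 0] with x hax hbx hsqx
    have hba : b x ≤ a x := by nlinarith
    refine ⟨sub_nonneg.2 hba, (le_div_iff₀ hbx).2 (by nlinarith)⟩
  exact squeeze_zero' (hle.mono fun _ => And.left) (hle.mono fun _ => And.right) hdiv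

lemma tendsto_log_sub_log_of_tendsto_sub (ha : Tendsto a l atTop) (hb : Tendsto b l atTop)
    (h : Tendsto (fun x => a x - b x) l (𝓝 0)) :
    Tendsto (fun x => log (b x) - log (a x)) l (𝓝 0) := by
  have hratio : Tendsto (fun x => b x / a x) l (𝓝 1) := by
    have := tendsto_const_nhds (x := (1 : ℝ)).sub (h.div_atTop ha)
    rw [sub_zero] at this
    refine this.congr' ?_
    filter_upwards [ha.eventually_gt_atTop 0] with x hx
    field_simp
    ring
  have := (continuousAt_log one_ne_zero).tendsto.comp hratio
  rw [log_one] at this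
  refine this.congr' ?_
  filter_upwards [ha.eventually_gt_atTop 0, hb.eventually_gt_atTop 0] with x hax hbx
  exact log_div hbx.ne' hax.ne'

lemma tendsto_sq_sub_sq_sub_log_of_gaussTail_eq (hb : Tendsto b l atTop)
    (h : ∀ᶠ x in l, gaussTail (b x) = √(2 * π) * exp (-a x ^ 2 / 2)) :
    Tendsto (fun x => a x ^ 2 - b x ^ 2 - 2 * log (b x)) l (𝓝 (log (2 * π))) := by
  have := (tendsto_log_gaussTail_add_sq_div_two_add_log.comp hb).const_mul 2
  rw [mul_zero] at this
  rw [← sub_zero (log (2 * π))]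
  refine (tendsto_const_nhds.sub this).congr' ?_
  filter_upwards [h] with x hx
  rw [Function.comp_apply, hx, log_mul (by positivity) (exp_pos _).ne', log_exp,
    log_sqrt (by positivity)]
  ring

end Asymptotics

lemma two_rpow_mul_eq_exp {ε n : ℝ} (hε : 0 ≤ ε) (hn : 0 ≤ n) :
    (2 : ℝ) ^ (ε * n) = exp ((√(2 * ε * log 2) * √n) ^ 2 / 2) := by
  rw [rpow_def_of_pos two_pos, mul_pow, sq_sqrt hn,
    sq_sqrt (mul_nonneg (by positivity) (log_nonneg one_le_two))]
  ring_nf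

lemma gaussTail_eq_of_two_rpow_mul_measure_eq_one {Ω : Type*} [MeasurableSpace Ω]
    {P : Measure Ω} {X : Ω → ℝ} {v : ℝ≥0} (hv : v ≠ 0) (hX : P.map X = gaussianReal 0 v)
    {β ε c : ℝ} (hβ : 0 < β) (hε : 0 ≤ ε) (hc : 0 < c)
    (h : (2 : ℝ) ^ (ε * v) * (P {ω | c ≤ exp (-β * X ω)}).toReal = 1) :
    gaussTail (log c / (β * √v)) =
      √(2 * π) * exp (-(√(2 * ε * log 2) * √v) ^ 2 / 2) := by
  rw [toReal_measure_le_exp_neg_mul hv hX hβ hc, two_rpow_mul_eq_exp hε v.coe_nonneg] at h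
  rw [neg_div, exp_neg]
  field_simp at h ⊢
  linear_combination h

lemma two_mul_div_mul_sub_sub_log_sub_log_eq {β βc n a b : ℝ} (hβ : β ≠ 0) (hβc : 0 < βc)
    (hn : 0 < n) (ha : a = βc * √n) :
    2 * (βc / β) * (n * β * βc - β * √n * b) - log (βc ^ 2 * n / 2) - log (4 * π) =
      a ^ 2 - b ^ 2 - 2 * log b - log (2 * π) + (a - b) ^ 2 + 2 * (log b - log a) := by
  have hsq : βc ^ 2 * n = a ^ 2 := by rw [ha, mul_pow, sq_sqrt hn.le]
  have hlog : log (a ^ 2 / 2) + log (4 * π) = log (2 * π) + 2 * log a := by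
    have hapos : 0 < a := ha ▸ by positivity
    have hlog_pow : 2 * log a = log (a ^ 2) := by rw [log_pow]; norm_num
    rw [hlog_pow, ← log_mul (by positivity) (by positivity),
      ← log_mul (by positivity) (by positivity)]
    congr 1
    ring
  have hpoly : 2 * (βc / β) * (n * β * βc - β * √n * b) = a ^ 2 - b ^ 2 + (a - b) ^ 2 := by
    rw [ha]
    field_simp
    linear_combination (-2 * βc ^ 2) * sq_sqrt hn.le
  rw [hsq]
  linear_combination hpoly - hlog

theorem cn_asymptotics_general
    {Ω : Type*} [MeasurableSpace Ω] (P : Measure Ω)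
    (H : (n : ℕ) → (Fin n → Bool) → Ω → ℝ)
    (hgauss : ∀ n x, Measure.map (H n x) P = gaussianReal 0 n)
    (β : ℝ) (hβ : 0 < β)
    (ε : ℝ) (hε0 : 0 < ε)
    (c : ℕ → ℝ)
    (hc : ∀ n, 1 ≤ n → ∀ x : Fin n → Bool, 0 < c n ∧
      (2 : ℝ) ^ (ε * n) * (P {ω | c n ≤ Real.exp (-β * H n x ω)}).toReal = 1) :
    Tendsto (fun n : ℕ =>
        2 * (Real.sqrt (2 * ε * Real.log 2) / β) *
            ((n : ℝ) * β * Real.sqrt (2 * ε * Real.log 2) - Real.log (c n)) -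
          Real.log (Real.sqrt (2 * ε * Real.log 2) ^ 2 * n / 2) -
          Real.log (4 * Real.pi))
      atTop (nhds 0) := by
  set βc := √(2 * ε * log 2)
  have hβc : 0 < βc := sqrt_pos.2 (mul_pos (by positivity) (log_pos one_lt_two))
  set a : ℕ → ℝ := fun n => βc * √n
  set b : ℕ → ℝ := fun n => log (c n) / (β * √n)
  have ha : Tendsto a atTop atTop :=
    (tendsto_sqrt_atTop.comp tendsto_natCast_atTop_atTop).const_mul_atTop hβc
  have hGb : ∀ᶠ n in atTop, gaussTail (b n) = √(2 * π) * exp (-a n ^ 2 / 2) := by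
    filter_upwards [eventually_ge_atTop 1] with n hn
    obtain ⟨hcn, heq⟩ := hc n hn fun _ => true
    simpa only [NNReal.coe_natCast] using gaussTail_eq_of_two_rpow_mul_measure_eq_one
      (by exact_mod_cast (by omega : n ≠ 0)) (hgauss n _) hβ hε0.le hcn
      (by simpa only [NNReal.coe_natCast] using heq)
  have hb : Tendsto b atTop atTop := by
    refine tendsto_atTop_of_tendsto_gaussTail (Tendsto.congr' (hGb.mono fun _ h => h.symm) ?_)
    simpa only [mul_zero, Function.comp_apply] using
      (tendsto_exp_neg_sq_div_two.comp ha).const_mul √(2 * π)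
  have hkey := tendsto_sq_sub_sq_sub_log_of_gaussTail_eq hb hGb
  have hab := tendsto_sub_of_tendsto_sq_sub_sq_sub_log (ha.eventually_ge_atTop 0) hb hkey
  have hsum := ((hkey.sub_const (log (2 * π))).add (hab.pow 2)).add
    ((tendsto_log_sub_log_of_tendsto_sub ha hb hab).const_mul 2)
  rw [sub_self, zero_pow two_ne_zero, mul_zero, add_zero, add_zero] at hsum
  refine hsum.congr' ?_
  filter_upwards [eventually_gt_atTop 0] with n hn
  have hsqrt : 0 < √(n : ℝ) := sqrt_pos.2 (Nat.cast_pos.2 hn)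
  rw [show log (c n) = β * √n * b n by simp only [b]; field_simp]
  exact (two_mul_div_mul_sub_sub_log_sub_log_eq hβ.ne' hβc (Nat.cast_pos.2 hn) rfl).symm

theorem cn_asymptotics
    {Ω : Type*} [MeasurableSpace Ω] (P : Measure Ω) [IsProbabilityMeasure P]
    (H : (n : ℕ) → (Fin n → Bool) → Ω → ℝ)
    (hmeas : ∀ n x, Measurable (H n x))
    (hgauss : ∀ n x, Measure.map (H n x) P = gaussianReal 0 n)
    (hindep : iIndepFun
      (fun p : (Σ n : ℕ, (Fin n → Bool)) => H p.1 p.2) P)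
    (β : ℝ) (hβ : 0 < β)
    (ε : ℝ) (hε0 : 0 < ε) (hε1 : ε < 1)
    (c : ℕ → ℝ)
    (hc : ∀ n, 1 ≤ n → ∀ x : Fin n → Bool, 0 < c n ∧
      (2 : ℝ) ^ (ε * n) * (P {ω | c n ≤ Real.exp (-β * H n x ω)}).toReal = 1) :
    Tendsto (fun n : ℕ =>
        2 * (Real.sqrt (2 * ε * Real.log 2) / β) *
            ((n : ℝ) * β * Real.sqrt (2 * ε * Real.log 2) - Real.log (c n)) -
          Real.log (Real.sqrt (2 * ε * Real.log 2) ^ 2 * n / 2) -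
          Real.log (4 * Real.pi))
      atTop (nhds 0) :=
  cn_asymptotics_general P H hgauss β hβ ε hε0 c hc
end

section
/- Fix 0 < ε < 1 and let x_n = δ_n/ε where δ_n > 0. If x_n → 0 as n → ∞ and n·β·β_c(ε)·x_n − log r_n* → +∞, then lim_{n→∞} log( r_n(ε − δ_n) / r_n(ε) ) / (n·x_n) = −β·β_c(ε)/2; in particular log(r_n(ε−δ_n)/r_n(ε)) = −(n β β_c(ε) x_n/2)(1+o(1)). -/
/-!
Writing `t_n(ρ) = log r_n(ρ) / (β √n)`, the defining equation of `r_n(ρ)` says that `t_n(ρ)` is the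
standard Gaussian quantile of level `2^{-ρn}`. The Mills-ratio bounds
`e^{-3/2} φ(t) / t ≤ Φ(-t) ≤ φ(t) / t` pin it down to `t_n(ρ)² = 2ρn log 2 - O(log n)`, so that
`log r_n(ρ) = β β_c(ρ) n + O(log n)`. Since `β_c(ε - δ) = β_c(ε) √(1 - x)`, the ratio in question is
`β β_c(ε) (√(1 - x_n) - 1) / x_n + O(log n / (n x_n))`; the first term tends to `-β β_c(ε) / 2`, the
derivative of `√(1 - x)` at `0`. The same quantile bounds at level `n^{-c*}` give
`log r_n* ≥ β √(n log n)`, so the growth hypothesis forces `n x_n ≳ √(n log n)` and the error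
vanishes.
-/

open MeasureTheory ProbabilityTheory Filter Real Set Topology
open scoped NNReal

lemma gaussianPDFReal_zero_one (x : ℝ) :
    gaussianPDFReal 0 1 x = (√(2 * π))⁻¹ * exp (-x ^ 2 / 2) := by
  simp [gaussianPDFReal]

lemma hasDerivAt_gaussianPDFReal_zero_one (x : ℝ) :
    HasDerivAt (gaussianPDFReal 0 1) (-x * gaussianPDFReal 0 1 x) x := by
  have h : HasDerivAt (fun y : ℝ => -y ^ 2 / 2) (-x) x :=
    ((hasDerivAt_pow 2 x).neg.div_const 2).congr_deriv (by ring)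
  rw [show gaussianPDFReal 0 1 = _ from funext gaussianPDFReal_zero_one]
  exact (h.exp.const_mul (√(2 * π))⁻¹).congr_deriv (by ring)

lemma tendsto_gaussianPDFReal_zero_one_atBot :
    Tendsto (gaussianPDFReal 0 1) atBot (𝓝 0) := by
  have h : Tendsto (fun x : ℝ => -x ^ 2 / 2) atBot atBot := by
    refine tendsto_atBot_atBot.mpr fun b => ⟨min b (-2), fun x hx => ?_⟩
    nlinarith [min_le_left b (-2), min_le_right b (-2)]
  simpa [funext gaussianPDFReal_zero_one] using
    (tendsto_exp_atBot.comp h).const_mul (√(2 * π))⁻¹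

lemma integrable_neg_mul_gaussianPDFReal_zero_one :
    Integrable (fun x : ℝ => -x * gaussianPDFReal 0 1 x) := by
  convert (integrable_mul_exp_neg_mul_sq (b := 1 / 2) (by norm_num)).const_mul
    (-(√(2 * π))⁻¹) using 2 with x
  rw [gaussianPDFReal_zero_one]; ring_nf

lemma integral_Iic_neg_mul_gaussianPDFReal_zero_one (a : ℝ) :
    ∫ x in Iic a, -x * gaussianPDFReal 0 1 x = gaussianPDFReal 0 1 a := by
  simpa using integral_Iic_of_hasDerivAt_of_tendsto
    (hasDerivAt_gaussianPDFReal_zero_one a).continuousAt.continuousWithinAt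
    (fun x _ => hasDerivAt_gaussianPDFReal_zero_one x)
    integrable_neg_mul_gaussianPDFReal_zero_one.integrableOn tendsto_gaussianPDFReal_zero_one_atBot

lemma cdf_gaussianReal_zero_one (t : ℝ) :
    cdf (gaussianReal 0 1) t = ∫ x in Iic t, gaussianPDFReal 0 1 x := by
  rw [cdf_eq_real, measureReal_def, gaussianReal_apply_eq_integral 0 one_ne_zero,
    ENNReal.toReal_ofReal (setIntegral_nonneg measurableSet_Iic fun x _ =>
      gaussianPDFReal_nonneg 0 1 x)]

lemma cdf_gaussianReal_neg_le {s : ℝ} (hs : 0 < s) :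
    cdf (gaussianReal 0 1) (-s) ≤ gaussianPDFReal 0 1 s / s := by
  -- on `Iic (-s)` the density is at most `-x / s` times itself
  calc cdf (gaussianReal 0 1) (-s)
      ≤ ∫ x in Iic (-s), s⁻¹ * (-x * gaussianPDFReal 0 1 x) := by
        rw [cdf_gaussianReal_zero_one]
        refine setIntegral_mono_on (integrable_gaussianPDFReal 0 1).integrableOn ?_
          measurableSet_Iic fun x hx => ?_
        · exact (integrable_neg_mul_gaussianPDFReal_zero_one.const_mul _).integrableOn
        · have : 1 ≤ s⁻¹ * -x := by
            rw [← div_eq_inv_mul, le_div_iff₀ hs]; linarith [mem_Iic.mp hx]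
          nlinarith [gaussianPDFReal_nonneg 0 1 x]
    _ = gaussianPDFReal 0 1 s / s := by
        rw [integral_const_mul, integral_Iic_neg_mul_gaussianPDFReal_zero_one,
          gaussianPDFReal_zero_one, gaussianPDFReal_zero_one]
        ring_nf

lemma exp_neg_three_halves_mul_le_cdf_gaussianReal_neg {s : ℝ} (hs : 1 ≤ s) :
    exp (-3 / 2) * gaussianPDFReal 0 1 s / s ≤ cdf (gaussianReal 0 1) (-s) := by
  have hs0 : 0 < s := by linarith
  -- the density is at least `exp (-3/2) * φ s` on `[-s - 1/s, -s]`, an interval of length `1/s`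
  have hbound : ∀ x ∈ Icc (-s - s⁻¹) (-s),
      exp (-3 / 2) * gaussianPDFReal 0 1 s ≤ gaussianPDFReal 0 1 x := by
    intro x ⟨hx1, hx2⟩
    have hinv : s⁻¹ ≤ 1 := inv_le_one_of_one_le₀ hs
    have hsinv : s * s⁻¹ = 1 := mul_inv_cancel₀ hs0.ne'
    have hx : x ^ 2 ≤ s ^ 2 + 3 := by nlinarith [inv_pos.mpr hs0]
    rw [gaussianPDFReal_zero_one, gaussianPDFReal_zero_one, mul_left_comm, ← exp_add]
    gcongr
    linarith
  calc exp (-3 / 2) * gaussianPDFReal 0 1 s / s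
      = ∫ _ in Icc (-s - s⁻¹) (-s), exp (-3 / 2) * gaussianPDFReal 0 1 s := by
        rw [setIntegral_const, Real.volume_real_Icc_of_le (by linarith [inv_pos.mpr hs0]),
          smul_eq_mul]
        ring
    _ ≤ ∫ x in Icc (-s - s⁻¹) (-s), gaussianPDFReal 0 1 x :=
        setIntegral_mono_on (integrableOn_const measure_Icc_lt_top.ne)
          (integrable_gaussianPDFReal 0 1).integrableOn measurableSet_Icc hbound
    _ ≤ ∫ x in Iic (-s), gaussianPDFReal 0 1 x :=
        setIntegral_mono_set (integrable_gaussianPDFReal 0 1).integrableOn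
          (.of_forall fun x => gaussianPDFReal_nonneg 0 1 x) Icc_subset_Iic_self.eventuallyLE
    _ = cdf (gaussianReal 0 1) (-s) := (cdf_gaussianReal_zero_one _).symm

lemma cdf_gaussianReal_neg_one_pos : 0 < cdf (gaussianReal 0 1) (-1) :=
  lt_of_lt_of_le (by have := gaussianPDFReal_pos 0 1 1 one_ne_zero; positivity)
    (exp_neg_three_halves_mul_le_cdf_gaussianReal_neg le_rfl)

lemma log_gaussianPDFReal_zero_one (x : ℝ) :
    log (gaussianPDFReal 0 1 x) = -(log (2 * π) + x ^ 2) / 2 := by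
  rw [gaussianPDFReal_zero_one, log_mul (by positivity) (exp_pos _).ne', log_inv,
    log_sqrt (by positivity), log_exp]
  ring

lemma sq_bounds_of_cdf_gaussianReal_neg_eq_inv {t q : ℝ}
    (hq : cdf (gaussianReal 0 1) (-t) = q⁻¹) (hq1 : q⁻¹ < cdf (gaussianReal 0 1) (-1)) :
    1 ≤ t ∧ t ^ 2 ≤ 2 * log q ∧ 2 * log q - log (2 * log q) - (3 + log (2 * π)) ≤ t ^ 2 := by
  have ht : 1 ≤ t := by
    by_contra! h
    linarith [(cdf (gaussianReal 0 1)).mono (neg_le_neg h.le)]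
  have ht0 : 0 < t := by linarith
  have hφ := gaussianPDFReal_pos 0 1 t one_ne_zero
  have hlow := hq ▸ exp_neg_three_halves_mul_le_cdf_gaussianReal_neg ht
  have hup := hq ▸ cdf_gaussianReal_neg_le ht0
  have hq0 : 0 < q := inv_pos.mp (lt_of_lt_of_le (by positivity) hlow)
  have hlog2π : 0 ≤ log (2 * π) := log_nonneg (by linarith [pi_gt_three])
  have hupper : t ^ 2 ≤ 2 * log q := by
    have : q⁻¹ ≤ gaussianPDFReal 0 1 t := hup.trans (div_le_self hφ.le ht)
    have := log_le_log (inv_pos.mpr hq0) this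
    rw [log_inv, log_gaussianPDFReal_zero_one] at this
    linarith
  refine ⟨ht, hupper, ?_⟩
  have hlogt : 2 * log t ≤ log (2 * log q) := by
    simpa [log_pow] using log_le_log (by positivity) hupper
  have := log_le_log (by positivity) hlow
  rw [log_inv, log_div (by positivity) ht0.ne', log_mul (exp_pos _).ne' hφ.ne', log_exp,
    log_gaussianPDFReal_zero_one] at this
  linarith

lemma abs_sub_le_div_of_sq_bounds {t a E : ℝ} (ha : 0 < a) (ht : 0 ≤ t)
    (hlo : a ^ 2 - E ≤ t ^ 2) (hhi : t ^ 2 ≤ a ^ 2) : |t - a| ≤ E / a := by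
  have hta : t ≤ a := (pow_le_pow_iff_left₀ ht ha.le two_ne_zero).mp hhi
  rw [abs_of_nonpos (by linarith), le_div_iff₀ ha]
  nlinarith

lemma abs_log_div_div_sub_le_of_abs_log_sub_le {β b n x E Ra Rb : ℝ} (hb : 0 < b) (hn : 0 < n)
    (hx0 : 0 < x) (hx : x ≤ 1 / 2) (hRa : 0 < Ra) (hRb : 0 < Rb)
    (ha : |log Ra - β * (b * √(1 - x)) * n| ≤ β * E / (b * √(1 - x)))
    (hb' : |log Rb - β * b * n| ≤ β * E / b) :
    |log (Ra / Rb) / (n * x) - β * b * ((√(1 - x) - 1) / x)| ≤ 3 * β / b * (E / (n * x)) := by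
  have hs : 1 / 2 ≤ √(1 - x) := le_sqrt_of_sq_le (by linarith)
  have hE : 0 ≤ β * E := by simpa using (le_div_iff₀ hb).mp ((abs_nonneg _).trans hb')
  have ha' : β * E / (b * √(1 - x)) ≤ 2 * (β * E / b) := by
    rw [div_le_iff₀ (by positivity)]
    calc β * E = 2 * (β * E / b) * (b * (1 / 2)) := by field_simp
      _ ≤ 2 * (β * E / b) * (b * √(1 - x)) := by gcongr
  have hsplit : log (Ra / Rb) / (n * x) - β * b * ((√(1 - x) - 1) / x) =
      ((log Ra - β * (b * √(1 - x)) * n) - (log Rb - β * b * n)) / (n * x) := by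
    rw [log_div hRa.ne' hRb.ne']
    field_simp
    ring
  rw [hsplit, abs_div, abs_of_pos (mul_pos hn hx0), div_le_iff₀ (mul_pos hn hx0)]
  calc _ ≤ |log Ra - β * (b * √(1 - x)) * n| + |log Rb - β * b * n| := abs_sub _ _
    _ ≤ 3 * (β * E / b) := by linarith
    _ = _ := by field_simp

section Quantile

variable {Ω : Type*} [MeasurableSpace Ω] {P : Measure Ω} {h : Ω → ℝ}

lemma toReal_measure_le_exp_neg_mul_s3 (hm : Measurable h) {v : ℝ≥0} (hv : v ≠ 0)
    (hg : P.map h = gaussianReal 0 v) {β ρ : ℝ} (hβ : 0 < β) (hρ : 0 < ρ) :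
    (P {ω | ρ ≤ exp (-β * h ω)}).toReal = cdf (gaussianReal 0 1) (-(log ρ / (β * √v))) := by
  have hσ : 0 < √(v : ℝ) := sqrt_pos.mpr (NNReal.coe_pos.mpr (pos_iff_ne_zero.mpr hv))
  have hset : {ω | ρ ≤ exp (-β * h ω)} =
      (fun ω => h ω / √v) ⁻¹' Iic (-(log ρ / (β * √v))) := by
    ext ω
    have : -(log ρ / (β * √v)) * √v = -log ρ / β := by field_simp
    rw [mem_ofPred_eq, ← log_le_iff_le_exp hρ, mem_preimage, mem_Iic, div_le_iff₀ hσ, this,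
      le_div_iff₀ hβ]
    constructor <;> intro h <;> linarith
  have hstd : P.map (fun ω => h ω / √v) = gaussianReal 0 1 := by
    rw [← Function.comp_def (· / √(v : ℝ)) h, ← Measure.map_map (by fun_prop) hm, hg,
      gaussianReal_map_div_const, zero_div]
    congr
    ext
    simp [sq_sqrt v.coe_nonneg, div_self (NNReal.coe_ne_zero.mpr hv)]
  rw [hset, ← Measure.map_apply (by fun_prop) measurableSet_Iic, hstd, cdf_eq_real,
    measureReal_def]

lemma sq_bounds_of_mul_toReal_measure_le_exp_neg_mul_eq_one (hm : Measurable h) {v : ℝ≥0}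
    (hv : v ≠ 0) (hg : P.map h = gaussianReal 0 v) {β R q : ℝ} (hβ : 0 < β) (hR : 0 < R)
    (hq : q * (P {ω | R ≤ exp (-β * h ω)}).toReal = 1)
    (hq1 : q⁻¹ < cdf (gaussianReal 0 1) (-1)) :
    1 ≤ log R / (β * √v) ∧ (log R / (β * √v)) ^ 2 ≤ 2 * log q ∧
      2 * log q - log (2 * log q) - (3 + log (2 * π)) ≤ (log R / (β * √v)) ^ 2 := by
  refine sq_bounds_of_cdf_gaussianReal_neg_eq_inv ?_ hq1
  rw [← toReal_measure_le_exp_neg_mul_s3 hm hv hg hβ hR]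
  exact eq_inv_of_mul_eq_one_right hq

lemma abs_log_sub_le_of_two_rpow_mul_eq_one (hm : Measurable h) {n : ℕ} (hn : n ≠ 0)
    (hg : P.map h = gaussianReal 0 n) {β ρ R : ℝ} (hβ : 0 < β) (hρ : 0 < ρ) (hR : 0 < R)
    (hq : 2 ^ (ρ * n) * (P {ω | R ≤ exp (-β * h ω)}).toReal = 1)
    (hq1 : (2 ^ (ρ * n))⁻¹ < cdf (gaussianReal 0 1) (-1)) :
    |log R - β * √(2 * ρ * log 2) * n| ≤
      β * (log n + (log (2 * ρ * log 2) + 3 + log (2 * π))) / √(2 * ρ * log 2) := by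
  obtain ⟨ht, hhi, hlo⟩ := sq_bounds_of_mul_toReal_measure_le_exp_neg_mul_eq_one hm
    (Nat.cast_ne_zero.mpr hn) hg hβ hR hq hq1
  simp only [NNReal.coe_natCast] at ht hhi hlo
  have hn0 : (0 : ℝ) < n := Nat.cast_pos.mpr (Nat.pos_of_ne_zero hn)
  have hρ2 : 0 < 2 * ρ * log 2 := by positivity
  set t := log R / (β * √n)
  set a := √(2 * ρ * log 2) * √n
  have ha : 0 < a := by positivity
  have ha2 : a ^ 2 = 2 * log (2 ^ (ρ * n)) := by
    rw [mul_pow, sq_sqrt hρ2.le, sq_sqrt hn0.le, log_rpow two_pos]; ring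
  have hlog : log (2 * log (2 ^ (ρ * n))) = log n + log (2 * ρ * log 2) := by
    rw [log_rpow two_pos, ← log_mul hn0.ne' hρ2.ne']; ring_nf
  have hta := abs_sub_le_div_of_sq_bounds (t := t)
    (E := log n + (log (2 * ρ * log 2) + 3 + log (2 * π))) ha (by linarith)
    (by linarith) (by rwa [ha2])
  have hlogR : log R = β * √n * t := by simp only [t]; field_simp
  calc |log R - β * √(2 * ρ * log 2) * n| = β * √n * |t - a| := by
        rw [← abs_of_pos (by positivity : 0 < β * √n), ← abs_mul]
        congr 1
        linear_combination hlogR + β * √(2 * ρ * log 2) * mul_self_sqrt hn0.le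
    _ ≤ β * √n * ((log n + (log (2 * ρ * log 2) + 3 + log (2 * π))) / a) := by gcongr
    _ = _ := by simp only [a]; field_simp

lemma abs_log_div_div_sub_le_of_two_rpow_mul_eq_one (hm : Measurable h) {n : ℕ} (hn : n ≠ 0)
    (hg : P.map h = gaussianReal 0 n) {β ε δ : ℝ} (hβ : 0 < β) (hε : 0 < ε) (hδ : 0 < δ)
    (hδε : δ / ε ≤ 1 / 2) {R : ℝ → ℝ}
    (hR : ∀ ρ, 0 < ρ → 0 < R ρ ∧ 2 ^ (ρ * n) * (P {ω | R ρ ≤ exp (-β * h ω)}).toReal = 1)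
    (hsmall : (2 ^ (ε / 2 * n))⁻¹ < cdf (gaussianReal 0 1) (-1)) :
    |log (R (ε - δ) / R ε) / (n * (δ / ε)) -
        β * √(2 * ε * log 2) * ((√(1 - δ / ε) - 1) / (δ / ε))| ≤
      3 * β / √(2 * ε * log 2) *
        ((log n + (log (2 * ε * log 2) + 3 + log (2 * π))) / (n * (δ / ε))) := by
  have hρ : ε / 2 ≤ ε - δ := by linarith [(div_le_iff₀ hε).mp hδε]
  have hsmall' {ρ : ℝ} (h : ε / 2 ≤ ρ) : ((2 : ℝ) ^ (ρ * n))⁻¹ < cdf (gaussianReal 0 1) (-1) :=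
    lt_of_le_of_lt (by gcongr; norm_num) hsmall
  obtain ⟨hRa0, hRa⟩ := hR (ε - δ) (by linarith)
  obtain ⟨hRb0, hRb⟩ := hR ε hε
  have ha := abs_log_sub_le_of_two_rpow_mul_eq_one hm hn hg hβ (by linarith) hRa0 hRa
    (hsmall' hρ)
  have hb := abs_log_sub_le_of_two_rpow_mul_eq_one hm hn hg hβ hε hRb0 hRb
    (hsmall' (by linarith))
  have hβc : √(2 * (ε - δ) * log 2) = √(2 * ε * log 2) * √(1 - δ / ε) := by
    rw [← sqrt_mul (by positivity)]
    congr 1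
    field_simp
  rw [hβc] at ha
  refine abs_log_div_div_sub_le_of_abs_log_sub_le (by positivity) (by positivity)
    (by positivity) hδε hRa0 hRb0 (ha.trans ?_) hb
  have : 0 < 2 * (ε - δ) * log 2 := mul_pos (by linarith) (log_pos one_lt_two)
  gcongr
  linarith

lemma eventually_mul_sqrt_mul_log_le_log {H : ℕ → Ω → ℝ} (hm : ∀ n, Measurable (H n))
    (hg : ∀ n : ℕ, P.map (H n) = gaussianReal 0 n) {β c : ℝ} (hβ : 0 < β) (hc : 1 < c)
    {R : ℕ → ℝ}
    (hR : ∀ n : ℕ, 2 ≤ n → 0 < R n ∧ (n : ℝ) ^ c * (P {ω | R n ≤ exp (-β * H n ω)}).toReal = 1) :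
    ∀ᶠ n : ℕ in atTop, β * √(n * log n) ≤ log (R n) := by
  have hlog_atTop := tendsto_log_atTop.comp tendsto_natCast_atTop_atTop
  have hsmall : ∀ᶠ n : ℕ in atTop, ((n : ℝ) ^ c)⁻¹ < cdf (gaussianReal 0 1) (-1) :=
    ((tendsto_rpow_atTop (by linarith)).comp tendsto_natCast_atTop_atTop).inv_tendsto_atTop
      |>.eventually_lt_const cdf_gaussianReal_neg_one_pos
  have hlarge : ∀ᶠ n : ℕ in atTop, log (2 * c) + 3 + log (2 * π) ≤ (2 * c - 2) * log n :=
    (hlog_atTop.const_mul_atTop (by linarith)).eventually_ge_atTop _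
  filter_upwards [eventually_ge_atTop 2, hsmall, hlarge] with n hn hsmall hlarge
  have hn0 : (0 : ℝ) < n := by positivity
  have hlogn : 0 < log n := log_pos (by exact_mod_cast hn)
  obtain ⟨hR0, hq⟩ := hR n hn
  obtain ⟨ht, -, hlo⟩ := sq_bounds_of_mul_toReal_measure_le_exp_neg_mul_eq_one (hm n)
    (Nat.cast_ne_zero.mpr (by omega)) (hg n) hβ hR0 hq hsmall
  simp only [NNReal.coe_natCast, log_rpow hn0] at ht hlo
  set t := log (R n) / (β * √n)
  have hloglog : log (2 * (c * log n)) ≤ log (2 * c) + log n := by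
    rw [← mul_assoc, log_mul (by positivity) hlogn.ne']
    linarith [log_le_self hlogn.le]
  have hsqrt : √(log n) ≤ t := (sqrt_le_left (by linarith)).mpr (by linarith)
  calc β * √(n * log n) = β * √n * √(log n) := by rw [sqrt_mul hn0.le]; ring
    _ ≤ β * √n * t := by gcongr
    _ = log (R n) := by simp only [t]; field_simp

end Quantile

lemma tendsto_log_add_div_sqrt_mul_log (C : ℝ) :
    Tendsto (fun x : ℝ => (log x + C) / √(x * log x)) atTop (𝓝 0) := by
  have hlog_div : Tendsto (fun x : ℝ => √(log x / x)) atTop (𝓝 0) := by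
    have h : Tendsto (fun x : ℝ => log x / x) atTop (𝓝 0) := by
      simpa using tendsto_pow_log_div_mul_add_atTop 1 0 1 one_ne_zero
    simpa using h.sqrt
  have hconst : Tendsto (fun x : ℝ => C / √(x * log x)) atTop (𝓝 0) :=
    tendsto_const_nhds.div_atTop
      (tendsto_sqrt_atTop.comp (tendsto_id.atTop_mul_atTop₀ tendsto_log_atTop))
  rw [← add_zero 0]
  refine (hlog_div.add hconst).congr' ?_
  filter_upwards [eventually_gt_atTop 1] with x hx
  have hx0 : 0 < x := by linarith
  have hlogx : 0 < log x := log_pos hx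
  rw [add_div, sqrt_div hlogx.le, sqrt_mul hx0.le]
  congr 1
  field_simp
  rw [sq_sqrt hlogx.le]

lemma tendsto_log_add_div_of_sqrt_mul_log_le {y : ℕ → ℝ} {K : ℝ} (hK : 0 < K) (C : ℝ)
    (hy : ∀ᶠ n : ℕ in atTop, √(n * log n) ≤ K * y n) :
    Tendsto (fun n : ℕ => (log n + C) / y n) atTop (𝓝 0) := by
  have hlog_atTop := tendsto_log_atTop.comp tendsto_natCast_atTop_atTop
  have hbound := ((tendsto_log_add_div_sqrt_mul_log C).comp
    tendsto_natCast_atTop_atTop).const_mul K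
  rw [mul_zero] at hbound
  have hpos : ∀ᶠ n : ℕ in atTop, 0 < √(n * log n) ∧ 0 ≤ log n + C := by
    filter_upwards [hlog_atTop.eventually_gt_atTop 0, hlog_atTop.eventually_ge_atTop (-C),
      eventually_gt_atTop 0] with n h1 h2 h3
    exact ⟨sqrt_pos.mpr (mul_pos (by exact_mod_cast h3) h1), by simp at h2; linarith⟩
  refine squeeze_zero' ?_ ?_ hbound
  · filter_upwards [hy, hpos] with n hy ⟨hs, hC⟩
    exact div_nonneg hC (by nlinarith)
  · filter_upwards [hy, hpos] with n hy ⟨hs, hC⟩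
    calc (log n + C) / y n ≤ (log n + C) / (√(n * log n) / K) :=
          div_le_div_of_nonneg_left hC (by positivity) ((div_le_iff₀' hK).mpr hy)
      _ = K * ((log n + C) / √(n * log n)) := by field_simp

lemma tendsto_sqrt_one_sub_sub_one_div :
    Tendsto (fun x : ℝ => (√(1 - x) - 1) / x) (𝓝[≠] 0) (𝓝 (-1 / 2)) := by
  have h : HasDerivAt (fun x : ℝ => √(1 - x)) (-1 / 2) 0 := by
    simpa using ((hasDerivAt_id (0 : ℝ)).const_sub 1).sqrt (by norm_num)
  simpa [div_eq_inv_mul] using hasDerivAt_iff_tendsto_slope_zero.mp h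

theorem rn_ratio_asymptotics_general
    {Ω : Type*} [MeasurableSpace Ω] (P : Measure Ω)
    (H : (n : ℕ) → (Fin n → Bool) → Ω → ℝ)
    (hmeas : ∀ n x, Measurable (H n x))
    (hgauss : ∀ n x, Measure.map (H n x) P = gaussianReal 0 n)
    (β : ℝ) (hβ : 0 < β)
    (ε : ℝ) (hε0 : 0 < ε)
    (r : ℕ → ℝ → ℝ)
    (hr : ∀ n, 1 ≤ n → ∀ ρ : ℝ, 0 < ρ → ∀ x : Fin n → Bool, 0 < r n ρ ∧
      (2 : ℝ) ^ (ρ * n) * (P {ω | r n ρ ≤ Real.exp (-β * H n x ω)}).toReal = 1)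
    (cstar : ℝ) (hcstar : 1 + Real.log 4 < cstar)
    (rstar : ℕ → ℝ)
    (hrstar : ∀ n, 2 ≤ n → ∀ x : Fin n → Bool, 0 < rstar n ∧
      (n : ℝ) ^ cstar * (P {ω | rstar n ≤ Real.exp (-β * H n x ω)}).toReal = 1)
    (δ : ℕ → ℝ) (hδpos : ∀ n, 0 < δ n)
    (hx0 : Tendsto (fun n : ℕ => δ n / ε) atTop (nhds 0))
    (hgrow : Tendsto (fun n : ℕ =>
      (n : ℝ) * β * Real.sqrt (2 * ε * Real.log 2) * (δ n / ε) - Real.log (rstar n))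
      atTop atTop) :
    Tendsto (fun n : ℕ =>
        Real.log (r n (ε - δ n) / r n ε) / ((n : ℝ) * (δ n / ε)))
      atTop (nhds (-(β * Real.sqrt (2 * ε * Real.log 2)) / 2)) := by
  set b := √(2 * ε * log 2)
  have hb : 0 < b := sqrt_pos.mpr (by positivity)
  have hx : ∀ᶠ n : ℕ in atTop, δ n / ε ≤ 1 / 2 := hx0.eventually (ge_mem_nhds (by norm_num))
  have hsmall : ∀ᶠ n : ℕ in atTop, ((2 : ℝ) ^ (ε / 2 * n))⁻¹ < cdf (gaussianReal 0 1) (-1) :=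
    ((tendsto_rpow_atTop_of_base_gt_one 2 one_lt_two).comp
      (tendsto_natCast_atTop_atTop.const_mul_atTop (by positivity))).inv_tendsto_atTop
      |>.eventually_lt_const cdf_gaussianReal_neg_one_pos
  have hclose : ∀ᶠ n : ℕ in atTop,
      |log (r n (ε - δ n) / r n ε) / (n * (δ n / ε)) - β * b * ((√(1 - δ n / ε) - 1) / (δ n / ε))|
        ≤ 3 * β / b * ((log n + (log (2 * ε * log 2) + 3 + log (2 * π))) / (n * (δ n / ε))) := by
    filter_upwards [eventually_ne_atTop 0, hx, hsmall] with n hn hxn hsmall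
    exact abs_log_div_div_sub_le_of_two_rpow_mul_eq_one (hmeas n _) hn (hgauss n _) hβ hε0
      (hδpos n) hxn (fun ρ hρ => hr n (by omega) ρ hρ fun _ => true) hsmall
  have hgrowth : ∀ᶠ n : ℕ in atTop, √(n * log n) ≤ b * (n * (δ n / ε)) := by
    filter_upwards [eventually_mul_sqrt_mul_log_le_log (fun n => hmeas n fun _ => true)
      (fun n => hgauss n _) hβ (by linarith [log_nonneg (by norm_num : (1 : ℝ) ≤ 4)])
      (fun n hn => hrstar n hn fun _ => true), hgrow.eventually_ge_atTop 0] with n h1 h2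
    refine le_of_mul_le_mul_left ?_ hβ
    linarith
  have hmain : Tendsto (fun n => β * b * ((√(1 - δ n / ε) - 1) / (δ n / ε))) atTop
      (𝓝 (-(β * b) / 2)) := by
    rw [show -(β * b) / 2 = β * b * (-1 / 2) by ring]
    exact (tendsto_sqrt_one_sub_sub_one_div.comp (tendsto_nhdsWithin_iff.mpr
      ⟨hx0, .of_forall fun n => (div_pos (hδpos n) hε0).ne'⟩)).const_mul (β * b)
  have herr := (tendsto_log_add_div_of_sqrt_mul_log_le hb
    (log (2 * ε * log 2) + 3 + log (2 * π)) hgrowth).const_mul (3 * β / b)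
  rw [mul_zero] at herr
  refine tendsto_of_tendsto_of_dist hmain (squeeze_zero' (.of_forall fun _ => dist_nonneg) ?_ herr)
  filter_upwards [hclose] with n hn
  rwa [dist_comm, dist_eq]

theorem rn_ratio_asymptotics
    {Ω : Type*} [MeasurableSpace Ω] (P : Measure Ω) [IsProbabilityMeasure P]
    (H : (n : ℕ) → (Fin n → Bool) → Ω → ℝ)
    (hmeas : ∀ n x, Measurable (H n x))
    (hgauss : ∀ n x, Measure.map (H n x) P = gaussianReal 0 n)
    (hindep : iIndepFun
      (fun p : (Σ n : ℕ, (Fin n → Bool)) => H p.1 p.2) P)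
    (β : ℝ) (hβ : 0 < β)
    (ε : ℝ) (hε0 : 0 < ε) (hε1 : ε < 1)
    (r : ℕ → ℝ → ℝ)
    (hr : ∀ n, 1 ≤ n → ∀ ρ : ℝ, 0 < ρ → ∀ x : Fin n → Bool, 0 < r n ρ ∧
      (2 : ℝ) ^ (ρ * n) * (P {ω | r n ρ ≤ Real.exp (-β * H n x ω)}).toReal = 1)
    (cstar : ℝ) (hcstar : 1 + Real.log 4 < cstar)
    (rstar : ℕ → ℝ)
    (hrstar : ∀ n, 2 ≤ n → ∀ x : Fin n → Bool, 0 < rstar n ∧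
      (n : ℝ) ^ cstar * (P {ω | rstar n ≤ Real.exp (-β * H n x ω)}).toReal = 1)
    (δ : ℕ → ℝ) (hδpos : ∀ n, 0 < δ n) (hδ0 : Tendsto δ atTop (nhds 0))
    (hx0 : Tendsto (fun n : ℕ => δ n / ε) atTop (nhds 0))
    (hgrow : Tendsto (fun n : ℕ =>
      (n : ℝ) * β * Real.sqrt (2 * ε * Real.log 2) * (δ n / ε) - Real.log (rstar n))
      atTop atTop) :
    Tendsto (fun n : ℕ =>
        Real.log (r n (ε - δ n) / r n ε) / ((n : ℝ) * (δ n / ε)))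
      atTop (nhds (-(β * Real.sqrt (2 * ε * Real.log 2)) / 2)) :=
  rn_ratio_asymptotics_general P H hmeas hgauss β hβ ε hε0 r hr cstar hcstar rstar hrstar δ hδpos
    hx0 hgrow
end

section
/- ℙ-almost surely, lim_{n→∞} n^{c*} · ( n^{c*}·2^{−n}·|V_n*| − 1 ) = 0; that is, |V_n*| = 2^n n^{−c*}(1 + o(n^{−c*})) almost surely. -/
/-!
Write `p_n = n^{-c*}`. The number of vertices in `V_n*` is a sum of `2^n` pairwise independent
indicators of events of probability `p_n`, so it has mean `2^n p_n` and variance at most `2^n p_n`.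
By Chebyshev, the normalised error `n^{c*} (n^{c*} 2^{-n} |V_n*| - 1)` exceeds `ε` with probability
at most `n^{3c*} / (ε² 2^n)`. This is summable in `n`, so Borel–Cantelli gives almost sure
convergence to `0`.
-/

open MeasureTheory ProbabilityTheory Filter Real
open scoped Topology

lemma Set.ncard_setOf_mem_eq_sum_indicator {Ω ι : Type*} [Fintype ι] (E : ι → Set Ω) (ω : Ω) :
    (({i | ω ∈ E i}.ncard : ℕ) : ℝ) = ∑ i, (E i).indicator (1 : Ω → ℝ) ω := by
  classical
  rw [Set.ncard_eq_toFinset_card', Set.toFinset_ofPred, Finset.card_filter]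
  push_cast
  exact Finset.sum_congr rfl fun i _ => by by_cases h : ω ∈ E i <;> simp [h]

namespace ProbabilityTheory

variable {Ω ι : Type*} [MeasurableSpace Ω] {P : Measure Ω}

lemma IndepSet.indepFun_indicator_one {s t : Set Ω} (h : IndepSet s t P) :
    IndepFun (s.indicator (1 : Ω → ℝ)) (t.indicator (1 : Ω → ℝ)) P := by
  have hle : ∀ u : Set Ω, MeasurableSpace.comap (u.indicator (1 : Ω → ℝ)) inferInstance
      ≤ MeasurableSpace.generateFrom {u} := fun u =>
    (Measurable.indicator (m := MeasurableSpace.generateFrom {u}) measurable_const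
      (MeasurableSpace.measurableSet_generateFrom rfl)).comap_le
  rw [IndepSet_iff_Indep] at h
  rw [IndepFun_iff_Indep]
  exact indep_of_indep_of_le h (hle s) (hle t)

lemma variance_indicator_one_le [IsProbabilityMeasure P] {s : Set Ω} (hs : MeasurableSet s) :
    variance (s.indicator (1 : Ω → ℝ)) P ≤ P.real s := by
  have hsq : s.indicator (1 : Ω → ℝ) ^ 2 = s.indicator 1 := by
    ext ω
    by_cases hω : ω ∈ s <;> simp [hω]
  calc variance (s.indicator (1 : Ω → ℝ)) P
      ≤ P[s.indicator (1 : Ω → ℝ) ^ 2] :=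
        variance_le_expectation_sq (measurable_const.indicator hs).aestronglyMeasurable
    _ = P.real s := by rw [hsq, integral_indicator_one hs]

variable [IsProbabilityMeasure P] [Fintype ι] {E : ι → Set Ω}

theorem measure_le_abs_ncard_sub_sum_le (hE : ∀ i, MeasurableSet (E i))
    (hindep : Pairwise fun i j => IndepSet (E i) (E j) P) {t : ℝ} (ht : 0 < t) :
    P {ω | t ≤ |({i | ω ∈ E i}.ncard : ℝ) - ∑ i, P.real (E i)|}
      ≤ ENNReal.ofReal ((∑ i, P.real (E i)) / t ^ 2) := by
  set S : Ω → ℝ := ∑ i, (E i).indicator 1 with hS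
  have hmem : ∀ i, MemLp ((E i).indicator (1 : Ω → ℝ)) 2 P := fun i =>
    memLp_indicator_const 2 (hE i) 1 (Or.inr (measure_ne_top P _))
  have hcount : ∀ ω, ({i | ω ∈ E i}.ncard : ℝ) = S ω := fun ω => by
    rw [Set.ncard_setOf_mem_eq_sum_indicator, hS, Finset.sum_apply]
  have hmean : P[S] = ∑ i, P.real (E i) := by
    simp only [hS, Finset.sum_apply]
    rw [integral_finsetSum _ fun i _ => (hmem i).integrable one_le_two]
    exact Finset.sum_congr rfl fun i _ => integral_indicator_one (hE i)
  have hvar : variance S P ≤ ∑ i, P.real (E i) := by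
    rw [hS, IndepFun.variance_sum (fun i _ => hmem i)
      fun i _ j _ hij => IndepSet.indepFun_indicator_one (hindep hij)]
    exact Finset.sum_le_sum fun i _ => variance_indicator_one_le (hE i)
  calc P {ω | t ≤ |({i | ω ∈ E i}.ncard : ℝ) - ∑ i, P.real (E i)|}
      = P {ω | t ≤ |S ω - P[S]|} := by simp only [hcount, hmean]
    _ ≤ ENNReal.ofReal (variance S P / t ^ 2) :=
        meas_ge_le_variance_div_sq (memLp_finsetSum' _ fun i _ => hmem i) ht
    _ ≤ ENNReal.ofReal ((∑ i, P.real (E i)) / t ^ 2) := by gcongr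

theorem measureReal_le_abs_normalized_ncard_le [Nonempty ι] (hE : ∀ i, MeasurableSet (E i))
    (hindep : Pairwise fun i j => IndepSet (E i) (E j) P) {a : ℝ} (ha : 0 < a)
    (hp : ∀ i, P.real (E i) = a⁻¹) {ε : ℝ} (hε : 0 < ε) :
    P.real {ω | ε ≤ |a * (a * (Fintype.card ι : ℝ)⁻¹ * {i | ω ∈ E i}.ncard - 1)|}
      ≤ a ^ 3 / (ε ^ 2 * Fintype.card ι) := by
  set N : ℝ := (Fintype.card ι : ℝ)
  have hN : 0 < N := by simp [N, Fintype.card_pos]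
  have hsum : ∑ i, P.real (E i) = N * a⁻¹ := by simp [hp, N]
  have hset : {ω | ε ≤ |a * (a * N⁻¹ * {i | ω ∈ E i}.ncard - 1)|}
      = {ω | ε * N / a ^ 2 ≤ |({i | ω ∈ E i}.ncard : ℝ) - ∑ i, P.real (E i)|} := by
    ext ω
    have hfactor : ∀ c : ℝ, a * (a * N⁻¹ * c - 1) = a ^ 2 / N * (c - N * a⁻¹) := fun c => by
      field_simp
    simp only [Set.mem_ofPred_eq, hsum, hfactor, abs_mul,
      abs_of_pos (by positivity : 0 < a ^ 2 / N)]
    rw [← div_le_iff₀' (by positivity), div_div_eq_mul_div]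
  rw [hset, measureReal_def]
  calc (P {ω | ε * N / a ^ 2 ≤ |({i | ω ∈ E i}.ncard : ℝ) - ∑ i, P.real (E i)|}).toReal
      ≤ (ENNReal.ofReal ((∑ i, P.real (E i)) / (ε * N / a ^ 2) ^ 2)).toReal :=
        ENNReal.toReal_mono ENNReal.ofReal_ne_top
          (measure_le_abs_ncard_sub_sum_le hE hindep (by positivity))
    _ = a ^ 3 / (ε ^ 2 * N) := by
        rw [ENNReal.toReal_ofReal (by positivity), hsum]
        field_simp

end ProbabilityTheory

theorem MeasureTheory.ae_tendsto_zero_of_summable_measureReal_le_abs {Ω : Type*}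
    [MeasurableSpace Ω] {P : Measure Ω} [IsFiniteMeasure P] {X : ℕ → Ω → ℝ}
    (h : ∀ ε > 0, Summable fun n => P.real {ω | ε ≤ |X n ω|}) :
    ∀ᵐ ω ∂P, Tendsto (fun n => X n ω) atTop (𝓝 0) := by
  have hsmall : ∀ k : ℕ, ∀ᵐ ω ∂P, ∀ᶠ n in atTop, |X n ω| < 1 / (k + 1) := by
    intro k
    have hfin : ∑' n, P {ω | 1 / (k + 1) ≤ |X n ω|} ≠ ⊤ := by
      convert ENNReal.ofReal_ne_top using 1
      rw [ENNReal.ofReal_tsum_of_nonneg (fun n => measureReal_nonneg)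
        (h (1 / (k + 1)) (by positivity))]
      exact tsum_congr fun n => (ofReal_measureReal).symm
    filter_upwards [ae_eventually_notMem hfin] with ω hω
    simpa only [Set.mem_ofPred_eq, not_le] using hω
  filter_upwards [ae_all_iff.2 hsmall] with ω hω
  refine Metric.tendsto_nhds.2 fun ε hε => ?_
  obtain ⟨k, hk⟩ := exists_nat_one_div_lt hε
  filter_upwards [hω k] with n hn
  rw [Real.dist_0_eq_abs]
  exact hn.trans hk

theorem summable_rpow_div_two_pow (a : ℝ) : Summable fun n : ℕ => (n : ℝ) ^ a / 2 ^ n := by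
  refine (summable_pow_mul_geometric_of_norm_lt_one ⌈a⌉₊ (r := (2 : ℝ)⁻¹)
    (by norm_num)).of_norm_bounded_eventually_nat ?_
  filter_upwards [eventually_ge_atTop 1] with n hn
  rw [Real.norm_of_nonneg (by positivity), div_eq_mul_inv, inv_pow]
  gcongr
  rw [← rpow_natCast]
  exact rpow_le_rpow_of_exponent_le (by exact_mod_cast hn) (Nat.le_ceil a)

theorem Vstar_cardinality_general
    {Ω : Type*} [MeasurableSpace Ω] (P : Measure Ω) [IsProbabilityMeasure P]
    (H : (n : ℕ) → (Fin n → Bool) → Ω → ℝ)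
    (hmeas : ∀ n x, Measurable (H n x))
    (hindep : iIndepFun
      (fun p : (Σ n : ℕ, (Fin n → Bool)) => H p.1 p.2) P)
    (β : ℝ)
    (cstar : ℝ)
    (rstar : ℕ → ℝ)
    (hrstar : ∀ n, 2 ≤ n → ∀ x : Fin n → Bool, 0 < rstar n ∧
      (n : ℝ) ^ cstar * (P {ω | rstar n ≤ Real.exp (-β * H n x ω)}).toReal = 1) :
    ∀ᵐ ω ∂P, Tendsto (fun n : ℕ =>
        (n : ℝ) ^ cstar *
          ((n : ℝ) ^ cstar * ((2 : ℝ) ^ n)⁻¹ *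
            (Set.ncard {x : Fin n → Bool | rstar n ≤ Real.exp (-β * H n x ω)} : ℝ) - 1))
      atTop (nhds 0) := by
  set E : (n : ℕ) → (Fin n → Bool) → Set Ω := fun n x => H n x ⁻¹' {t | rstar n ≤ exp (-β * t)}
  have hA : ∀ n, MeasurableSet {t : ℝ | rstar n ≤ exp (-β * t)} := fun n =>
    measurableSet_le measurable_const (by fun_prop)
  have hE : ∀ n x, MeasurableSet (E n x) := fun n x => hmeas n x (hA n)
  have hindepE : ∀ n, Pairwise fun x y => IndepSet (E n x) (E n y) P := fun n x y hxy =>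
    (indepFun_iff_indepSet_preimage (hmeas n x) (hmeas n y)).1
      (hindep.indepFun (show (⟨n, x⟩ : Σ n, (Fin n → Bool)) ≠ ⟨n, y⟩ by simpa using hxy))
      _ _ (hA n) (hA n)
  refine ae_tendsto_zero_of_summable_measureReal_le_abs fun ε hε => ?_
  refine ((summable_rpow_div_two_pow (3 * cstar)).mul_left (ε ^ 2)⁻¹)
    |>.of_norm_bounded_eventually_nat ?_
  filter_upwards [eventually_ge_atTop 2] with n hn
  have hn0 : (0 : ℝ) < n := by positivity
  have hp : ∀ x, P.real (E n x) = ((n : ℝ) ^ cstar)⁻¹ := fun x =>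
    eq_inv_of_mul_eq_one_right (hrstar n hn x).2
  rw [Real.norm_of_nonneg measureReal_nonneg]
  have hcard : (Fintype.card (Fin n → Bool) : ℝ) = 2 ^ n := by simp
  calc _ ≤ ((n : ℝ) ^ cstar) ^ 3 / (ε ^ 2 * 2 ^ n) := by
        rw [← hcard]
        exact measureReal_le_abs_normalized_ncard_le (hE n) (hindepE n) (rpow_pos_of_pos hn0 _)
          hp hε
    _ = _ := by
        rw [← rpow_natCast, ← rpow_mul hn0.le]
        push_cast
        ring_nf

theorem Vstar_cardinality
    {Ω : Type*} [MeasurableSpace Ω] (P : Measure Ω) [IsProbabilityMeasure P]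
    (H : (n : ℕ) → (Fin n → Bool) → Ω → ℝ)
    (hmeas : ∀ n x, Measurable (H n x))
    (hgauss : ∀ n x, Measure.map (H n x) P = gaussianReal 0 n)
    (hindep : iIndepFun
      (fun p : (Σ n : ℕ, (Fin n → Bool)) => H p.1 p.2) P)
    (β : ℝ) (hβ : 0 < β)
    (cstar : ℝ) (hcstar : 1 + Real.log 4 < cstar)
    (rstar : ℕ → ℝ)
    (hrstar : ∀ n, 2 ≤ n → ∀ x : Fin n → Bool, 0 < rstar n ∧
      (n : ℝ) ^ cstar * (P {ω | rstar n ≤ Real.exp (-β * H n x ω)}).toReal = 1) :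
    ∀ᵐ ω ∂P, Tendsto (fun n : ℕ =>
        (n : ℝ) ^ cstar *
          ((n : ℝ) ^ cstar * ((2 : ℝ) ^ n)⁻¹ *
            (Set.ncard {x : Fin n → Bool | rstar n ≤ Real.exp (-β * H n x ω)} : ℝ) - 1))
      atTop (nhds 0) :=
  Vstar_cardinality_general P H hmeas hindep β cstar rstar hrstar
end

section
/- For every η > 0, ℙ-almost surely, for all but finitely many n, |T_n \ T_n°| ≤ (1+η)·n^4·2^{n(1−2ε_n)}. -/
/-!
If `x ∈ T_n \ T_n°`, a path in `G(V_n*)` from `x` to another point of `T_n` shortens to a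
self-avoiding path of the hypercube with both endpoints in `T_n` and all inner vertices in `V_n*`,
so `|T_n \ T_n°|` is at most the number `N_n` of such paths. By independence a fixed
self-avoiding path with `k ≥ 1` edges has this property with probability
`2^{-2ε_n n} n^{-c*(k-1)}`, and at most `2^n n^k` walks have `k` edges. Since `c* ≥ 2`, the ratio
`n^{1-c*}` of this geometric series is at most `1/2`, so `𝔼 N_n ≤ 2n·2^{n(1-2ε_n)}`. Markov's
inequality bounds `ℙ(N_n ≥ (1+η) n^4 2^{n(1-2ε_n)})` by `2/n^3`, which is summable, and
Borel–Cantelli concludes.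
-/

open MeasureTheory ProbabilityTheory Filter Real

noncomputable section

/-- The `n`-dimensional hypercube graph on `{-1,1}^n ≃ (Fin n → Bool)`:
two vertices are adjacent iff they differ in exactly one coordinate. -/
def hypercube (n : ℕ) : SimpleGraph (Fin n → Bool) where
  Adj x y := hammingDist x y = 1
  symm := ⟨fun x y h => (hammingDist_comm y x).trans h⟩
  loopless := ⟨fun x h => by simp [hammingDist_self] at h⟩

instance (n : ℕ) : DecidableRel (hypercube n).Adj :=
  fun x y => inferInstanceAs (Decidable (hammingDist x y = 1))

open scoped ENNReal Finset

lemma Fin.prod_ite_endpoints {M : Type*} [CommMonoid M] (m : ℕ) (a b : M) :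
    ∏ i : Fin (m + 2), (if (i : ℕ) = 0 ∨ (i : ℕ) = m + 1 then a else b) = a ^ 2 * b ^ m := by
  rw [Fin.prod_univ_succ, Fin.prod_univ_castSucc]
  simp [fun i : Fin m => i.is_lt.ne, sq, mul_comm, mul_assoc]

lemma ENNReal.sum_Ico_pow_mul_pow_le {D b : ℝ≥0∞} (hDb : D * b ≤ 2⁻¹) (N : ℕ) :
    ∑ k ∈ Finset.Ico 1 N, D ^ k * b ^ (k - 1) ≤ 2 * D := by
  calc ∑ k ∈ Finset.Ico 1 N, D ^ k * b ^ (k - 1)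
      = D * ∑ j ∈ Finset.range (N - 1), (D * b) ^ j := by
        rw [Finset.sum_Ico_eq_sum_range, Finset.mul_sum]
        refine Finset.sum_congr rfl fun j _ => ?_
        rw [add_tsub_cancel_left, pow_add, pow_one, mul_pow, mul_assoc]
    _ ≤ D * ∑' j, (2⁻¹ : ℝ≥0∞) ^ j := by
        gcongr
        exact (Finset.sum_le_sum fun j _ => pow_le_pow_left' hDb j).trans (ENNReal.sum_le_tsum _)
    _ = 2 * D := by rw [ENNReal.tsum_geometric_two, mul_comm]

lemma ENNReal.eq_ofReal_inv_of_mul_toReal_eq_one {a : ℝ≥0∞} {c : ℝ} (h : c * a.toReal = 1) :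
    a = ENNReal.ofReal c⁻¹ := by
  have hne : a ≠ ∞ := fun ha => by simp [ha] at h
  rw [← ENNReal.ofReal_toReal hne, eq_inv_of_mul_eq_one_right h]

lemma ENNReal.tsum_ofReal_div_nat_pow_ne_top {c : ℝ} (hc : 0 ≤ c) {p : ℕ} (hp : 1 < p) :
    ∑' n : ℕ, ENNReal.ofReal (c / (n : ℝ) ^ p) ≠ ∞ := by
  rw [← ENNReal.ofReal_tsum_of_nonneg (fun n => by positivity)
    (((Real.summable_one_div_nat_pow.2 hp).mul_left c).congr fun n => mul_one_div _ _)]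
  exact ENNReal.ofReal_ne_top

section CardFilter

variable {Ω ι : Type*}

open Classical in
lemma card_filter_eq_sum_indicator (W : Finset ι) (Q : ι → Ω → Prop) (ω : Ω) :
    (#{i ∈ W | Q i ω} : ℝ≥0∞) = ∑ i ∈ W, {ω | Q i ω}.indicator 1 ω := by
  simp only [Set.indicator_apply, Set.mem_ofPred_eq, Pi.one_apply, Finset.sum_boole]

variable [MeasurableSpace Ω]

open Classical in
lemma measurable_card_filter (W : Finset ι) {Q : ι → Ω → Prop}
    (hQ : ∀ i, MeasurableSet {ω | Q i ω}) :
    Measurable fun ω => (#{i ∈ W | Q i ω} : ℝ≥0∞) := by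
  simp_rw [card_filter_eq_sum_indicator]
  exact Finset.measurable_sum _ fun i _ => measurable_one.indicator (hQ i)

open Classical in
lemma lintegral_card_filter (P : Measure Ω) (W : Finset ι) {Q : ι → Ω → Prop}
    (hQ : ∀ i, MeasurableSet {ω | Q i ω}) :
    ∫⁻ ω, (#{i ∈ W | Q i ω} : ℝ≥0∞) ∂P = ∑ i ∈ W, P {ω | Q i ω} := by
  simp_rw [card_filter_eq_sum_indicator]
  rw [lintegral_finsetSum _ fun i _ => measurable_one.indicator (hQ i)]
  simp_rw [lintegral_indicator_one (hQ _)]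

end CardFilter

lemma MeasureTheory.ae_eventually_notMem_of_eventually_measure_le {Ω : Type*}
    [MeasurableSpace Ω] {μ : Measure Ω} {s : ℕ → Set Ω} {u : ℕ → ℝ≥0∞} (hu : ∑' n, u n ≠ ∞)
    (hs : ∀ᶠ n in atTop, μ (s n) ≤ u n) : ∀ᵐ ω ∂μ, ∀ᶠ n in atTop, ω ∉ s n := by
  obtain ⟨N, hN⟩ := eventually_atTop.1 hs
  have hsum : ∑' n, μ (s (n + N)) ≠ ∞ := ne_top_of_le_ne_top hu <|
    (ENNReal.tsum_le_tsum fun n => hN _ (Nat.le_add_left N n)).trans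
      (ENNReal.tsum_comp_le_tsum_of_injective (add_left_injective N) u)
  filter_upwards [ae_eventually_notMem hsum] with ω hω
  rw [← map_add_atTop_eq_nat N]
  exact hω

namespace SimpleGraph

variable {V : Type*} {G : SimpleGraph V}

def Walk.LinksThrough {u v : V} (p : G.Walk u v) (A B : Set V) : Prop :=
  ∀ i ≤ p.length, p.getVert i ∈ if i = 0 ∨ i = p.length then A else B

lemma Walk.linksThrough_map_induce {A B : Set V} {a b : B} (q : (G.induce B).Walk a b)
    (ha : (a : V) ∈ A) (hb : (b : V) ∈ A) :
    (q.map (Embedding.induce B).toHom).LinksThrough A B := by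
  intro i _
  rw [Walk.getVert_map, Walk.length_map]
  split_ifs with hi
  · rcases hi with rfl | rfl
    · simpa using ha
    · simpa [Walk.getVert_length] using hb
  · exact (q.getVert i).2

lemma exists_isPath_linksThrough_of_reachable {A B : Set V} {x y : V} (hx : x ∈ A) (hy : y ∈ A)
    (hxy : x ≠ y) (hxB : x ∈ B) (hyB : y ∈ B) (h : (G.induce B).Reachable ⟨x, hxB⟩ ⟨y, hyB⟩) :
    ∃ p : G.Walk x y, p.IsPath ∧ 0 < p.length ∧ p.LinksThrough A B := by
  classical
  obtain ⟨q⟩ := h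
  refine ⟨q.toPath.1.map (Embedding.induce B).toHom, q.toPath.2.map Subtype.val_injective,
    Nat.pos_of_ne_zero fun h0 => hxy (Walk.eq_of_length_eq_zero h0),
    q.toPath.1.linksThrough_map_induce hx hy⟩

section Probability

variable {Ω E : Type*}

lemma Walk.setOf_linksThrough_eq_iInter {Y : V → Ω → E} {s t : Set E} {u v : V}
    (p : G.Walk u v) :
    {ω | p.LinksThrough {x | Y x ω ∈ s} {x | Y x ω ∈ t}} = ⋂ i : Fin (p.length + 1),
      Y (p.getVert i) ⁻¹' if (i : ℕ) = 0 ∨ (i : ℕ) = p.length then s else t := by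
  ext ω
  simp only [Walk.LinksThrough, Set.mem_ofPred_eq, Set.mem_iInter, Set.mem_preimage]
  refine ⟨fun h i => ?_, fun h i hi => ?_⟩
  · have := h i (Nat.lt_succ_iff.1 i.2)
    split_ifs at this ⊢ <;> exact this
  · have := h ⟨i, Nat.lt_succ_iff.2 hi⟩
    split_ifs at this ⊢ <;> exact this

variable [MeasurableSpace Ω] [MeasurableSpace E] {P : Measure Ω}

lemma Walk.measurableSet_linksThrough {Y : V → Ω → E} (hY : ∀ x, Measurable (Y x))
    {s t : Set E} (hs : MeasurableSet s) (ht : MeasurableSet t) {u v : V} (p : G.Walk u v) :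
    MeasurableSet {ω | p.LinksThrough {x | Y x ω ∈ s} {x | Y x ω ∈ t}} := by
  rw [p.setOf_linksThrough_eq_iInter]
  exact MeasurableSet.iInter fun i => hY _ (by split_ifs <;> assumption)

lemma Walk.measure_linksThrough {Y : V → Ω → E} (hind : iIndepFun Y P) {s t : Set E}
    (hs : MeasurableSet s) (ht : MeasurableSet t) {a b : ℝ≥0∞}
    (ha : ∀ x, P (Y x ⁻¹' s) = a) (hb : ∀ x, P (Y x ⁻¹' t) = b)
    {u v : V} {p : G.Walk u v} (hp : p.IsPath) (hlen : 0 < p.length) :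
    P {ω | p.LinksThrough {x | Y x ω ∈ s} {x | Y x ω ∈ t}} = a ^ 2 * b ^ (p.length - 1) := by
  have hinj : Function.Injective fun i : Fin (p.length + 1) => p.getVert i := fun i j h =>
    Fin.ext (hp.getVert_injOn (by simp; omega) (by simp; omega) h)
  rw [p.setOf_linksThrough_eq_iInter, (hind.precomp hinj).meas_iInter fun i =>
    ⟨_, by split_ifs <;> assumption, rfl⟩]
  have hfac : ∀ i : Fin (p.length + 1),
      P (Y (p.getVert i) ⁻¹' if (i : ℕ) = 0 ∨ (i : ℕ) = p.length then s else t)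
        = if (i : ℕ) = 0 ∨ (i : ℕ) = p.length then a else b := fun i => by
    split_ifs
    exacts [ha _, hb _]
  simp only [hfac]
  obtain ⟨m, hm⟩ : ∃ m, p.length = m + 1 := ⟨p.length - 1, by omega⟩
  rw [hm]
  exact Fin.prod_ite_endpoints m a b

end Probability

section Counting

variable [Fintype V] [DecidableEq V] [DecidableRel G.Adj]

lemma sum_card_finsetWalkLength_le {D : ℕ} (hD : ∀ v, G.degree v ≤ D) (k : ℕ) (u : V) :
    ∑ v, #(G.finsetWalkLength k u v) ≤ D ^ k := by
  induction k generalizing u with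
  | zero =>
    rw [Finset.sum_eq_single u (fun v _ hv => by simp [finsetWalkLength, Ne.symm hv]) (by simp)]
    simp [finsetWalkLength]
  | succ k ih =>
    calc ∑ v, #(G.finsetWalkLength (k + 1) u v)
        ≤ ∑ v, ∑ w : G.neighborSet u, #(G.finsetWalkLength k w v) := by
          gcongr with v
          rw [finsetWalkLength]
          exact Finset.card_biUnion_le.trans (by simp)
      _ = ∑ w : G.neighborSet u, ∑ v, #(G.finsetWalkLength k w v) := Finset.sum_comm
      _ ≤ ∑ _w : G.neighborSet u, D ^ k := Finset.sum_le_sum fun w _ => ih w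
      _ = G.degree u * D ^ k := by
          rw [Finset.sum_const, Finset.card_univ, card_neighborSet_eq_degree, smul_eq_mul]
      _ ≤ D ^ (k + 1) := by rw [pow_succ']; exact Nat.mul_le_mul_right _ (hD u)

variable (G)

def finsetPathLength (k : ℕ) (u v : V) : Finset (G.Walk u v) :=
  {p ∈ G.finsetWalkLength k u v | p.IsPath}

variable {G} in
lemma mem_finsetPathLength_iff {k : ℕ} {u v : V} {p : G.Walk u v} :
    p ∈ G.finsetPathLength k u v ↔ p.IsPath ∧ p.length = k := by
  simp [finsetPathLength, mem_finsetWalkLength_iff, and_comm]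

open Classical in
def linkingPathCount (A B : Set V) : ℕ :=
  ∑ k ∈ Finset.Ico 1 (Fintype.card V), ∑ u, ∑ v,
    #{p ∈ G.finsetPathLength k u v | p.LinksThrough A B}

variable {G}

lemma ncard_linked_le_linkingPathCount (A B : Set V) :
    (A \ {x | x ∈ A ∧ ∀ y ∈ A, (∃ hx : x ∈ B, ∃ hy : y ∈ B,
      (G.induce B).Reachable ⟨y, hy⟩ ⟨x, hx⟩) → y = x}).ncard ≤ G.linkingPathCount A B := by
  classical
  set L := A \ {x | x ∈ A ∧ ∀ y ∈ A, (∃ hx : x ∈ B, ∃ hy : y ∈ B,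
      (G.induce B).Reachable ⟨y, hy⟩ ⟨x, hx⟩) → y = x}
  have hpos : ∀ x ∈ L.toFinset, 0 < ∑ k ∈ Finset.Ico 1 (Fintype.card V), ∑ v,
      #{p ∈ G.finsetPathLength k x v | p.LinksThrough A B} := by
    intro x hx
    obtain ⟨hxA, hxL⟩ := Set.mem_toFinset.1 hx
    have : ¬ ∀ y ∈ A, (∃ hx : x ∈ B, ∃ hy : y ∈ B,
        (G.induce B).Reachable ⟨y, hy⟩ ⟨x, hx⟩) → y = x := fun h => hxL ⟨hxA, h⟩
    push Not at this
    obtain ⟨y, hyA, ⟨hxB, hyB, hreach⟩, hyx⟩ := this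
    obtain ⟨p, hp, hlen, hlink⟩ :=
      exists_isPath_linksThrough_of_reachable hxA hyA (Ne.symm hyx) hxB hyB hreach.symm
    exact Finset.sum_pos_iff.2 ⟨p.length, Finset.mem_Ico.2 ⟨hlen, hp.length_lt⟩,
      Finset.sum_pos_iff.2 ⟨y, Finset.mem_univ y, Finset.card_pos.2 ⟨p, by
        simp [finsetPathLength, mem_finsetWalkLength_iff, hp, hlink]⟩⟩⟩
  calc L.ncard = #L.toFinset := Set.ncard_eq_toFinset_card' L
    _ = ∑ _x ∈ L.toFinset, 1 := Finset.card_eq_sum_ones _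
    _ ≤ ∑ x ∈ L.toFinset, ∑ k ∈ Finset.Ico 1 (Fintype.card V), ∑ v,
          #{p ∈ G.finsetPathLength k x v | p.LinksThrough A B} := Finset.sum_le_sum hpos
    _ ≤ ∑ x, ∑ k ∈ Finset.Ico 1 (Fintype.card V), ∑ v,
          #{p ∈ G.finsetPathLength k x v | p.LinksThrough A B} :=
        Finset.sum_le_sum_of_subset (Finset.subset_univ _)
    _ = G.linkingPathCount A B := by rw [linkingPathCount, Finset.sum_comm]

lemma measurable_linkingPathCount {Ω E : Type*} [MeasurableSpace Ω] [MeasurableSpace E]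
    {Y : V → Ω → E} (hY : ∀ x, Measurable (Y x)) {s t : Set E} (hs : MeasurableSet s)
    (ht : MeasurableSet t) :
    Measurable fun ω => (G.linkingPathCount {x | Y x ω ∈ s} {x | Y x ω ∈ t} : ℝ≥0∞) := by
  simp only [linkingPathCount, Nat.cast_sum]
  exact Finset.measurable_sum _ fun k _ => Finset.measurable_sum _ fun u _ =>
    Finset.measurable_sum _ fun v _ =>
      measurable_card_filter _ fun p => p.measurableSet_linksThrough hY hs ht

lemma lintegral_linkingPathCount_le {Ω E : Type*} [MeasurableSpace Ω] [MeasurableSpace E]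
    {P : Measure Ω} {Y : V → Ω → E} (hY : ∀ x, Measurable (Y x)) (hind : iIndepFun Y P)
    {s t : Set E} (hs : MeasurableSet s) (ht : MeasurableSet t) {a b : ℝ≥0∞}
    (ha : ∀ x, P (Y x ⁻¹' s) = a) (hb : ∀ x, P (Y x ⁻¹' t) = b)
    {D : ℕ} (hD : ∀ v, G.degree v ≤ D) (hDb : D * b ≤ 2⁻¹) :
    ∫⁻ ω, (G.linkingPathCount {x | Y x ω ∈ s} {x | Y x ω ∈ t} : ℝ≥0∞) ∂P
      ≤ 2 * Fintype.card V * D * a ^ 2 := by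
  classical
  have hcount : ∀ k u v, Measurable fun ω => (#{p ∈ G.finsetPathLength k u v |
      p.LinksThrough {x | Y x ω ∈ s} {x | Y x ω ∈ t}} : ℝ≥0∞) := fun k u v =>
    measurable_card_filter _ fun p => p.measurableSet_linksThrough hY hs ht
  calc ∫⁻ ω, (G.linkingPathCount {x | Y x ω ∈ s} {x | Y x ω ∈ t} : ℝ≥0∞) ∂P
      = ∑ k ∈ Finset.Ico 1 (Fintype.card V), ∑ u, ∑ v, ∑ p ∈ G.finsetPathLength k u v,
          P {ω | p.LinksThrough {x | Y x ω ∈ s} {x | Y x ω ∈ t}} := by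
        simp only [linkingPathCount, Nat.cast_sum]
        rw [lintegral_finsetSum _ fun k _ =>
          Finset.measurable_sum _ fun u _ => Finset.measurable_sum _ fun v _ => hcount k u v]
        refine Finset.sum_congr rfl fun k _ => ?_
        rw [lintegral_finsetSum _ fun u _ => Finset.measurable_sum _ fun v _ => hcount k u v]
        refine Finset.sum_congr rfl fun u _ => ?_
        rw [lintegral_finsetSum _ fun v _ => hcount k u v]
        exact Finset.sum_congr rfl fun v _ =>
          lintegral_card_filter P _ fun p => p.measurableSet_linksThrough hY hs ht
    _ = ∑ k ∈ Finset.Ico 1 (Fintype.card V), ∑ u, ∑ v,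
          #(G.finsetPathLength k u v) * (a ^ 2 * b ^ (k - 1)) := by
        refine Finset.sum_congr rfl fun k hk => Finset.sum_congr rfl fun u _ =>
          Finset.sum_congr rfl fun v _ => ?_
        rw [← nsmul_eq_mul, ← Finset.sum_const]
        refine Finset.sum_congr rfl fun p hp => ?_
        obtain ⟨hpath, rfl⟩ := mem_finsetPathLength_iff.1 hp
        exact p.measure_linksThrough hind hs ht ha hb hpath (Finset.mem_Ico.1 hk).1
    _ ≤ ∑ k ∈ Finset.Ico 1 (Fintype.card V), ∑ _u : V, (D : ℝ≥0∞) ^ k * (a ^ 2 * b ^ (k - 1)) := by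
        gcongr with k _ u
        rw [← Finset.sum_mul]
        gcongr
        exact_mod_cast (Finset.sum_le_sum fun v _ => Finset.card_filter_le _ _).trans
          (sum_card_finsetWalkLength_le hD k u)
    _ = Fintype.card V * a ^ 2 *
          ∑ k ∈ Finset.Ico 1 (Fintype.card V), (D : ℝ≥0∞) ^ k * b ^ (k - 1) := by
        simp only [Finset.sum_const, Finset.card_univ, nsmul_eq_mul, Finset.mul_sum]
        refine Finset.sum_congr rfl fun k _ => by ring
    _ ≤ Fintype.card V * a ^ 2 * (2 * D) := by
        gcongr
        exact ENNReal.sum_Ico_pow_mul_pow_le hDb _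
    _ = 2 * Fintype.card V * D * a ^ 2 := by ring

end Counting

end SimpleGraph

lemma exists_eq_update_not_of_hypercube_adj {n : ℕ} {x y : Fin n → Bool}
    (h : (hypercube n).Adj x y) : ∃ j, y = Function.update x j (!x j) := by
  obtain ⟨j, hj⟩ := Finset.card_eq_one.1 h
  have hdiff : ∀ i, x i ≠ y i ↔ i = j := fun i => by simpa using Finset.ext_iff.1 hj i
  refine ⟨j, funext fun i => ?_⟩
  by_cases hij : i = j
  · subst hij
    rw [Function.update_self]
    exact Bool.eq_not.2 ((hdiff i).2 rfl).symm
  · rw [Function.update_of_ne hij]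
    exact (not_not.1 (mt (hdiff i).1 hij)).symm

lemma hypercube_degree_le {n : ℕ} (x : Fin n → Bool) : (hypercube n).degree x ≤ n := by
  classical
  calc (hypercube n).degree x ≤ #(Finset.univ.image fun j => Function.update x j (!x j)) :=
        Finset.card_le_card fun y hy => by
          obtain ⟨j, rfl⟩ :=
            exists_eq_update_not_of_hypercube_adj ((SimpleGraph.mem_neighborFinset _ _ _).1 hy)
          exact Finset.mem_image_of_mem _ (Finset.mem_univ j)
    _ ≤ n := Finset.card_image_le.trans (by simp)

lemma two_pow_mul_inv_two_rpow_sq (n : ℕ) (e : ℝ) :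
    (2 : ℝ) ^ n * ((2 : ℝ) ^ (e * n))⁻¹ ^ 2 = (2 : ℝ) ^ ((n : ℝ) * (1 - 2 * e)) := by
  rw [← Real.rpow_natCast, ← Real.rpow_neg zero_le_two, ← Real.rpow_natCast _ 2,
    ← Real.rpow_mul zero_le_two, ← Real.rpow_add two_pos]
  ring_nf

lemma nat_mul_inv_rpow_le_half {n : ℕ} (hn : 2 ≤ n) {c : ℝ} (hc : 2 ≤ c) :
    (n : ℝ) * ((n : ℝ) ^ c)⁻¹ ≤ 2⁻¹ := by
  have hn' : (2 : ℝ) ≤ n := by exact_mod_cast hn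
  have hsq : (n : ℝ) ^ (2 : ℝ) ≤ (n : ℝ) ^ c := Real.rpow_le_rpow_of_exponent_le (by linarith) hc
  rw [Real.rpow_two] at hsq
  rw [← div_eq_mul_inv, div_le_iff₀ (by positivity)]
  nlinarith

lemma measure_linkingPathCount_hypercube_ge_le {Ω E : Type*} [MeasurableSpace Ω]
    [MeasurableSpace E] {P : Measure Ω} {n : ℕ} (hn : 2 ≤ n) {Y : (Fin n → Bool) → Ω → E}
    (hY : ∀ x, Measurable (Y x)) (hind : iIndepFun Y P) {s t : Set E} (hs : MeasurableSet s)
    (ht : MeasurableSet t) {e c η : ℝ} (hc : 2 ≤ c) (hη : 0 ≤ η)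
    (ha : ∀ x, P (Y x ⁻¹' s) = ENNReal.ofReal ((2 : ℝ) ^ (e * n))⁻¹)
    (hb : ∀ x, P (Y x ⁻¹' t) = ENNReal.ofReal ((n : ℝ) ^ c)⁻¹) :
    P {ω | ENNReal.ofReal ((1 + η) * n ^ 4 * (2 : ℝ) ^ ((n : ℝ) * (1 - 2 * e)))
        ≤ (hypercube n).linkingPathCount {x | Y x ω ∈ s} {x | Y x ω ∈ t}}
      ≤ ENNReal.ofReal (2 / n ^ 3) := by
  set X : ℝ := (2 : ℝ) ^ ((n : ℝ) * (1 - 2 * e)) with hXdef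
  have hX : 0 < X := Real.rpow_pos_of_pos two_pos _
  have hn0 : (0 : ℝ) < n := by positivity
  have hthr : 0 < (1 + η) * n ^ 4 * X := by positivity
  have hDb : (n : ℝ≥0∞) * ENNReal.ofReal ((n : ℝ) ^ c)⁻¹ ≤ 2⁻¹ := by
    rw [← ENNReal.ofReal_natCast, ← ENNReal.ofReal_mul n.cast_nonneg, ← ENNReal.ofReal_ofNat 2,
      ← ENNReal.ofReal_inv_of_pos two_pos]
    exact ENNReal.ofReal_le_ofReal (nat_mul_inv_rpow_le_half hn hc)
  have hmean := SimpleGraph.lintegral_linkingPathCount_le hY hind hs ht ha hb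
    hypercube_degree_le hDb
  have hmean_eq : 2 * (Fintype.card (Fin n → Bool) : ℝ≥0∞) * n
      * ENNReal.ofReal ((2 : ℝ) ^ (e * n))⁻¹ ^ 2
      = ENNReal.ofReal (2 * n * X) := by
    have hp : 0 ≤ ((2 : ℝ) ^ (e * n))⁻¹ := by positivity
    rw [hXdef, ← two_pow_mul_inv_two_rpow_sq, ENNReal.ofReal_mul (by positivity),
      ENNReal.ofReal_mul (by positivity), ENNReal.ofReal_mul (by positivity),
      ENNReal.ofReal_pow hp, ENNReal.ofReal_pow zero_le_two, Fintype.card_fun, Fintype.card_bool,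
      Fintype.card_fin, ENNReal.ofReal_natCast, ENNReal.ofReal_ofNat, Nat.cast_pow, Nat.cast_ofNat]
    ring
  calc _ ≤ (∫⁻ ω, ((hypercube n).linkingPathCount {x | Y x ω ∈ s} {x | Y x ω ∈ t} : ℝ≥0∞) ∂P)
        / ENNReal.ofReal ((1 + η) * n ^ 4 * X) :=
        meas_ge_le_lintegral_div (SimpleGraph.measurable_linkingPathCount hY hs ht).aemeasurable
          (by simpa using hthr) ENNReal.ofReal_ne_top
    _ ≤ ENNReal.ofReal (2 * n * X) / ENNReal.ofReal ((1 + η) * n ^ 4 * X) := by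
        rw [← hmean_eq]; gcongr
    _ = ENNReal.ofReal (2 * n * X / ((1 + η) * n ^ 4 * X)) := (ENNReal.ofReal_div_of_pos hthr).symm
    _ ≤ ENNReal.ofReal (2 / n ^ 3) := by
        refine ENNReal.ofReal_le_ofReal ?_
        rw [div_le_div_iff₀ hthr (by positivity)]
        nlinarith [pow_pos hn0 3, pow_pos hn0 4]

theorem Tn_minus_Tcirc_cardinality_general
    {Ω : Type*} [MeasurableSpace Ω] (P : Measure Ω)
    (H : (n : ℕ) → (Fin n → Bool) → Ω → ℝ)
    (hmeas : ∀ n x, Measurable (H n x))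
    (hindep : iIndepFun
      (fun p : (Σ n : ℕ, (Fin n → Bool)) => H p.1 p.2) P)
    (β : ℝ)
    (cstar : ℝ) (hcstar : 1 + Real.log 4 < cstar)
    (rstar : ℕ → ℝ)
    (hrstar : ∀ n, 2 ≤ n → ∀ x : Fin n → Bool, 0 < rstar n ∧
      (n : ℝ) ^ cstar * (P {ω | rstar n ≤ Real.exp (-β * H n x ω)}).toReal = 1)
    (ε : ℝ) (hε0 : 0 < ε)
    (r : ℕ → ℝ → ℝ)
    (hr : ∀ n, 1 ≤ n → ∀ ρ : ℝ, 0 < ρ → ∀ x : Fin n → Bool, 0 < r n ρ ∧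
      (2 : ℝ) ^ (ρ * n) * (P {ω | r n ρ ≤ Real.exp (-β * H n x ω)}).toReal = 1)
    (δ : ℕ → ℝ) (hδ0 : Tendsto δ atTop (nhds 0)) :
    ∀ η : ℝ, 0 < η → ∀ᵐ ω ∂P, ∀ᶠ n : ℕ in atTop,
      ∀ T Vs : Set (Fin n → Bool),
        T = {x : Fin n → Bool | r n (ε - δ n) ≤ Real.exp (-β * H n x ω)} →
        Vs = {x : Fin n → Bool | rstar n ≤ Real.exp (-β * H n x ω)} →
        (Set.ncard (T \ {x : Fin n → Bool | x ∈ T ∧ ∀ y ∈ T,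
              (∃ hx : x ∈ Vs, ∃ hy : y ∈ Vs,
                (SimpleGraph.induce Vs (hypercube n)).Reachable ⟨y, hy⟩ ⟨x, hx⟩) →
              y = x}) : ℝ)
          ≤ (1 + η) * n ^ 4 * (2 : ℝ) ^ ((n : ℝ) * (1 - 2 * (ε - δ n))) := by
  intro η hη
  have hc : 2 ≤ cstar := by
    have : 1 < Real.log 4 :=
      (Real.lt_log_iff_exp_lt (by norm_num)).2 (Real.exp_one_lt_d9.trans (by norm_num))
    linarith
  have hind : ∀ n, iIndepFun (H n) P := fun n =>
    hindep.precomp (g := Sigma.mk n) sigma_mk_injective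
  have hlevel : ∀ c : ℝ, MeasurableSet {h : ℝ | c ≤ Real.exp (-β * h)} := fun c =>
    measurableSet_le measurable_const (by fun_prop)
  have hbad : ∀ᶠ n : ℕ in atTop,
      P {ω | ENNReal.ofReal ((1 + η) * n ^ 4 * (2 : ℝ) ^ ((n : ℝ) * (1 - 2 * (ε - δ n))))
        ≤ (hypercube n).linkingPathCount {x | r n (ε - δ n) ≤ Real.exp (-β * H n x ω)}
          {x | rstar n ≤ Real.exp (-β * H n x ω)}} ≤ ENNReal.ofReal (2 / n ^ 3) := by
    filter_upwards [eventually_ge_atTop 2, hδ0.eventually (gt_mem_nhds hε0)] with n hn hδn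
    exact measure_linkingPathCount_hypercube_ge_le hn (hmeas n)
      (hind n) (hlevel _) (hlevel _) hc hη.le
      (fun x => ENNReal.eq_ofReal_inv_of_mul_toReal_eq_one (hr n (by omega) _ (by linarith) x).2)
      (fun x => ENNReal.eq_ofReal_inv_of_mul_toReal_eq_one (hrstar n hn x).2)
  filter_upwards [ae_eventually_notMem_of_eventually_measure_le
    (ENNReal.tsum_ofReal_div_nat_pow_ne_top zero_le_two (by norm_num : 1 < 3)) hbad] with ω hω
  filter_upwards [hω] with n hn
  rintro T Vs rfl rfl
  exact (Nat.cast_le.2 (SimpleGraph.ncard_linked_le_linkingPathCount _ _)).trans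
    (ENNReal.natCast_lt_ofReal.1 (not_le.1 hn)).le

theorem Tn_minus_Tcirc_cardinality
    {Ω : Type*} [MeasurableSpace Ω] (P : Measure Ω) [IsProbabilityMeasure P]
    (H : (n : ℕ) → (Fin n → Bool) → Ω → ℝ)
    (hmeas : ∀ n x, Measurable (H n x))
    (hgauss : ∀ n x, Measure.map (H n x) P = gaussianReal 0 n)
    (hindep : iIndepFun
      (fun p : (Σ n : ℕ, (Fin n → Bool)) => H p.1 p.2) P)
    (β : ℝ) (hβ : 0 < β)
    (cstar : ℝ) (hcstar : 1 + Real.log 4 < cstar)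
    (rstar : ℕ → ℝ)
    (hrstar : ∀ n, 2 ≤ n → ∀ x : Fin n → Bool, 0 < rstar n ∧
      (n : ℝ) ^ cstar * (P {ω | rstar n ≤ Real.exp (-β * H n x ω)}).toReal = 1)
    (ε : ℝ) (hε0 : 0 < ε) (hε1 : ε < 1)
    (r : ℕ → ℝ → ℝ)
    (hr : ∀ n, 1 ≤ n → ∀ ρ : ℝ, 0 < ρ → ∀ x : Fin n → Bool, 0 < r n ρ ∧
      (2 : ℝ) ^ (ρ * n) * (P {ω | r n ρ ≤ Real.exp (-β * H n x ω)}).toReal = 1)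
    (δ : ℕ → ℝ) (hδpos : ∀ n, 0 < δ n) (hδ0 : Tendsto δ atTop (nhds 0)) :
    ∀ η : ℝ, 0 < η → ∀ᵐ ω ∂P, ∀ᶠ n : ℕ in atTop,
      ∀ T Vs : Set (Fin n → Bool),
        T = {x : Fin n → Bool | r n (ε - δ n) ≤ Real.exp (-β * H n x ω)} →
        Vs = {x : Fin n → Bool | rstar n ≤ Real.exp (-β * H n x ω)} →
        (Set.ncard (T \ {x : Fin n → Bool | x ∈ T ∧ ∀ y ∈ T,
              (∃ hx : x ∈ Vs, ∃ hy : y ∈ Vs,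
                (SimpleGraph.induce Vs (hypercube n)).Reachable ⟨y, hy⟩ ⟨x, hx⟩) →
              y = x}) : ℝ)
          ≤ (1 + η) * n ^ 4 * (2 : ℝ) ^ ((n : ℝ) * (1 - 2 * (ε - δ n))) :=
  Tn_minus_Tcirc_cardinality_general P H hmeas hindep β cstar hcstar rstar hrstar ε hε0 r hr δ hδ0
end
end

section
/- Let M_n = {x ∈ V_n : τ_n(x) > τ_n(y) for all neighbors y of x} be the set of local minima of the Hamiltonian H_n, and let V̄_n* = {x ∈ V_n : τ_n(x) ≤ 1/r_n*}. Then ℙ-almost surely, for all but finitely many n, V̄_n* ∩ M_n = ∅. -/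
/-!
If `x` lies in `V̄ₙ*` and is a local minimum of `Hₙ`, each of its `n` neighbours `y` satisfies
`τₙ(y) < 1/rₙ*`, i.e. `Hₙ(y) ≥ log rₙ*/β`. By the symmetry of the centred Gaussian, each of these
independent events has the probability `n^{-c*}` of `τₙ ≥ rₙ*`, so a union bound over the `2ⁿ`
vertices gives probability at most `2ⁿ n^{-c* n} ≤ 2⁻ⁿ` for `n ≥ 2`, and Borel–Cantelli concludes.
-/

open MeasureTheory ProbabilityTheory Filter Real
open scoped ENNReal

noncomputable section

lemma hypercube_adj_update_not {n : ℕ} (x : Fin n → Bool) (i : Fin n) :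
    (hypercube n).Adj x (Function.update x i (!x i)) := by
  show hammingDist x (Function.update x i (!x i)) = 1
  rw [hammingDist, Finset.card_eq_one]
  refine ⟨i, Finset.ext fun j => ?_⟩
  rcases eq_or_ne j i with rfl | hj
  · simp
  · simp [hj]

lemma injective_update_not {n : ℕ} (x : Fin n → Bool) :
    Function.Injective fun i : Fin n => Function.update x i (!x i) := by
  intro i j hij
  by_contra hne
  have hi : Function.update x i (!x i) i = Function.update x j (!x j) i := congrFun hij i
  rw [Function.update_self, Function.update_of_ne hne] at hi
  exact Bool.not_ne_self (x i) hi

lemma gaussianReal_Iic_neg (v : NNReal) (t : ℝ) :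
    gaussianReal 0 v (Set.Iic (-t)) = gaussianReal 0 v (Set.Ici t) := by
  conv_lhs => rw [← neg_zero, ← gaussianReal_map_neg,
    Measure.map_apply measurable_neg measurableSet_Iic]
  congr 1
  ext u
  simp

lemma measure_preimage_Ici_eq_Iic_neg {Ω : Type*} [MeasurableSpace Ω] {P : Measure Ω}
    {X : Ω → ℝ} {v : NNReal} (hX : P.map X = gaussianReal 0 v) (t : ℝ) :
    P (X ⁻¹' Set.Ici t) = P (X ⁻¹' Set.Iic (-t)) := by
  have hXm : AEMeasurable X P := by
    refine AEMeasurable.of_map_ne_zero ?_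
    rw [hX]
    exact IsProbabilityMeasure.ne_zero _
  rw [← Measure.map_apply_of_aemeasurable hXm measurableSet_Ici,
    ← Measure.map_apply_of_aemeasurable hXm measurableSet_Iic, hX, gaussianReal_Iic_neg]

lemma le_exp_neg_mul_iff {β r h : ℝ} (hβ : 0 < β) (hr : 0 < r) :
    r ≤ exp (-β * h) ↔ h ≤ -(log r / β) := by
  rw [← log_le_iff_le_exp hr, le_neg, div_le_iff₀ hβ]
  constructor <;> intro <;> linarith

lemma exp_neg_mul_le_inv_iff {β r h : ℝ} (hβ : 0 < β) (hr : 0 < r) :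
    exp (-β * h) ≤ r⁻¹ ↔ log r / β ≤ h := by
  rw [← exp_log (inv_pos.2 hr), exp_le_exp, log_inv, div_le_iff₀ hβ]
  constructor <;> intro <;> linarith

lemma measure_exists_forall_adj_le {Ω : Type*} [MeasurableSpace Ω] {P : Measure Ω} {n : ℕ}
    {X : (Fin n → Bool) → Ω → ℝ} (hX : iIndepFun X P) {t : ℝ} {q : ℝ≥0∞}
    (hq : ∀ y, P (X y ⁻¹' Set.Ici t) = q) :
    P {ω | ∃ x, ∀ y, (hypercube n).Adj x y → t ≤ X y ω} ≤ 2 ^ n * q ^ n := by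
  have hsub : {ω | ∃ x, ∀ y, (hypercube n).Adj x y → t ≤ X y ω} ⊆
      ⋃ x, ⋂ i, X (Function.update x i (!x i)) ⁻¹' Set.Ici t := by
    rintro ω ⟨x, hx⟩
    exact Set.mem_iUnion.2 ⟨x, Set.mem_iInter.2 fun i => hx _ (hypercube_adj_update_not x i)⟩
  have hneighbours : ∀ x, P (⋂ i, X (Function.update x i (!x i)) ⁻¹' Set.Ici t) = q ^ n := by
    intro x
    rw [(hX.precomp (injective_update_not x)).meas_iInter
      fun i => ⟨Set.Ici t, measurableSet_Ici, rfl⟩]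
    simp [hq]
  calc _ ≤ P (⋃ x, ⋂ i, X (Function.update x i (!x i)) ⁻¹' Set.Ici t) := measure_mono hsub
    _ ≤ ∑ x, P (⋂ i, X (Function.update x i (!x i)) ⁻¹' Set.Ici t) :=
      measure_iUnion_fintype_le _ _
    _ = 2 ^ n * q ^ n := by simp [hneighbours]

lemma ae_eventually_notMem_of_le_geometric {α : Type*} [MeasurableSpace α] {μ : Measure α}
    {s : ℕ → Set α} {a : ℝ≥0∞} (ha : a < 1) (N : ℕ) (hs : ∀ n ≥ N, μ (s n) ≤ a ^ n) :
    ∀ᵐ x ∂μ, ∀ᶠ n in atTop, x ∉ s n := by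
  have hsum : ∑' n, μ (s (n + N)) ≠ ∞ := by
    refine ne_top_of_le_ne_top (ENNReal.inv_ne_top.2 (tsub_pos_of_lt ha).ne') ?_
    calc ∑' n, μ (s (n + N)) ≤ ∑' n, a ^ n :=
          ENNReal.tsum_le_tsum fun n => (hs _ (Nat.le_add_left N n)).trans
            (pow_le_pow_of_le_one zero_le ha.le (Nat.le_add_right n N))
      _ = (1 - a)⁻¹ := ENNReal.tsum_geometric a
  filter_upwards [ae_eventually_notMem hsum] with x hx
  filter_upwards [(tendsto_sub_atTop_nat N).eventually hx, eventually_ge_atTop N] with n hn hNn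
  rwa [Nat.sub_add_cancel hNn] at hn

lemma measure_exists_local_min_le {Ω : Type*} [MeasurableSpace Ω] {P : Measure Ω} {n : ℕ}
    {X : (Fin n → Bool) → Ω → ℝ} {v : NNReal} (hgauss : ∀ x, P.map (X x) = gaussianReal 0 v)
    (hindep : iIndepFun X P) {β r : ℝ} (hβ : 0 < β) (hr : 0 < r) {q : ℝ≥0∞}
    (hq : ∀ x, P {ω | r ≤ exp (-β * X x ω)} = q) :
    P {ω | ∃ x, exp (-β * X x ω) ≤ r⁻¹ ∧
      ∀ y, (hypercube n).Adj x y → exp (-β * X y ω) < exp (-β * X x ω)} ≤ 2 ^ n * q ^ n := by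
  refine (measure_mono ?_).trans (measure_exists_forall_adj_le hindep (t := log r / β) fun y => ?_)
  · rintro ω ⟨x, hx, hmin⟩
    exact ⟨x, fun y hxy => (exp_neg_mul_le_inv_iff hβ hr).1 ((hmin y hxy).le.trans hx)⟩
  · rw [measure_preimage_Ici_eq_Iic_neg (hgauss y), ← hq y]
    congr 1
    ext ω
    exact (le_exp_neg_mul_iff hβ hr).symm

lemma one_lt_log_four : 1 < log 4 := by
  have := log_two_gt_d9
  rw [show (4 : ℝ) = 2 ^ 2 by norm_num, log_pow]
  push_cast
  linarith

lemma two_pow_mul_ofReal_inv_rpow_pow_le {n : ℕ} {c : ℝ} (hn : 2 ≤ n) (hc : 2 ≤ c) :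
    2 ^ n * ENNReal.ofReal ((n : ℝ) ^ c)⁻¹ ^ n ≤ 2⁻¹ ^ n := by
  have h4 : (4 : ℝ) ≤ (n : ℝ) ^ c := calc
    (4 : ℝ) = 2 ^ (2 : ℝ) := by norm_num
    _ ≤ (n : ℝ) ^ (2 : ℝ) := by gcongr; exact_mod_cast hn
    _ ≤ (n : ℝ) ^ c := rpow_le_rpow_of_exponent_le (by exact_mod_cast (by omega : 1 ≤ n)) hc
  have hq : ENNReal.ofReal ((n : ℝ) ^ c)⁻¹ ≤ 4⁻¹ := by
    rw [← ENNReal.ofReal_ofNat 4, ← ENNReal.ofReal_inv_of_pos (by norm_num)]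
    exact ENNReal.ofReal_le_ofReal (inv_anti₀ (by norm_num) h4)
  have h2 : (2 : ℝ≥0∞) * 4⁻¹ = 2⁻¹ := by
    rw [show (4 : ℝ≥0∞) = 2 * 2 by norm_num, ENNReal.mul_inv (by simp) (by simp), ← mul_assoc,
      ENNReal.mul_inv_cancel (by simp) (by simp), one_mul]
  calc _ = (2 * ENNReal.ofReal ((n : ℝ) ^ c)⁻¹) ^ n := (mul_pow _ _ _).symm
    _ ≤ (2 * 4⁻¹) ^ n := by gcongr
    _ = 2⁻¹ ^ n := by rw [h2]

theorem no_local_minima_in_Vbar_general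
    {Ω : Type*} [MeasurableSpace Ω] (P : Measure Ω) [IsProbabilityMeasure P]
    (H : (n : ℕ) → (Fin n → Bool) → Ω → ℝ)
    (hgauss : ∀ n x, Measure.map (H n x) P = gaussianReal 0 n)
    (hindep : iIndepFun
      (fun p : (Σ n : ℕ, (Fin n → Bool)) => H p.1 p.2) P)
    (β : ℝ) (hβ : 0 < β)
    (cstar : ℝ) (hcstar : 1 + Real.log 4 < cstar)
    (rstar : ℕ → ℝ)
    (hrstar : ∀ n, 2 ≤ n → ∀ x : Fin n → Bool, 0 < rstar n ∧
      (n : ℝ) ^ cstar * (P {ω | rstar n ≤ Real.exp (-β * H n x ω)}).toReal = 1) :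
    ∀ᵐ ω ∂P, ∀ᶠ n : ℕ in atTop,
      {x : Fin n → Bool | Real.exp (-β * H n x ω) ≤ (rstar n)⁻¹} ∩
        {x : Fin n → Bool | ∀ y : Fin n → Bool, (hypercube n).Adj x y →
          Real.exp (-β * H n y ω) < Real.exp (-β * H n x ω)} = ∅ := by
  have hc : 2 ≤ cstar := by linarith [one_lt_log_four]
  have hbound : ∀ n ≥ 2, P {ω | ∃ x, exp (-β * H n x ω) ≤ (rstar n)⁻¹ ∧
      ∀ y, (hypercube n).Adj x y → exp (-β * H n y ω) < exp (-β * H n x ω)} ≤ 2⁻¹ ^ n := by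
    intro n hn
    have hq : ∀ x, P {ω | rstar n ≤ exp (-β * H n x ω)} = ENNReal.ofReal ((n : ℝ) ^ cstar)⁻¹ := by
      intro x
      rw [← eq_inv_of_mul_eq_one_right (hrstar n hn x).2,
        ENNReal.ofReal_toReal (measure_ne_top _ _)]
    have hindep_n : iIndepFun (H n) P := hindep.precomp (g := Sigma.mk n) sigma_mk_injective
    exact (measure_exists_local_min_le (hgauss n) hindep_n hβ
      (hrstar n hn fun _ => true).1 hq).trans (two_pow_mul_ofReal_inv_rpow_pow_le hn hc)
  have hhalf : (2⁻¹ : ℝ≥0∞) < 1 := ENNReal.inv_lt_one.2 ENNReal.one_lt_two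
  filter_upwards [ae_eventually_notMem_of_le_geometric hhalf 2 hbound] with ω hω
  filter_upwards [hω] with n hn
  exact Set.eq_empty_iff_forall_notMem.2 fun x hx => hn ⟨x, hx⟩

theorem no_local_minima_in_Vbar
    {Ω : Type*} [MeasurableSpace Ω] (P : Measure Ω) [IsProbabilityMeasure P]
    (H : (n : ℕ) → (Fin n → Bool) → Ω → ℝ)
    (hmeas : ∀ n x, Measurable (H n x))
    (hgauss : ∀ n x, Measure.map (H n x) P = gaussianReal 0 n)
    (hindep : iIndepFun
      (fun p : (Σ n : ℕ, (Fin n → Bool)) => H p.1 p.2) P)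
    (β : ℝ) (hβ : 0 < β)
    (cstar : ℝ) (hcstar : 1 + Real.log 4 < cstar)
    (rstar : ℕ → ℝ)
    (hrstar : ∀ n, 2 ≤ n → ∀ x : Fin n → Bool, 0 < rstar n ∧
      (n : ℝ) ^ cstar * (P {ω | rstar n ≤ Real.exp (-β * H n x ω)}).toReal = 1) :
    ∀ᵐ ω ∂P, ∀ᶠ n : ℕ in atTop,
      {x : Fin n → Bool | Real.exp (-β * H n x ω) ≤ (rstar n)⁻¹} ∩
        {x : Fin n → Bool | ∀ y : Fin n → Bool, (hypercube n).Adj x y →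
          Real.exp (-β * H n y ω) < Real.exp (-β * H n x ω)} = ∅ :=
  no_local_minima_in_Vbar_general P H hgauss hindep β hβ cstar hcstar rstar hrstar

end
end

section
/- ℙ-almost surely, for all but finitely many n, for every edge {x,y} ∈ E_n one has max(H_n(x), H_n(y)) ≥ −( n·√(log 2) + 2·(log n)/√(log 2) ); equivalently, exp(−β·min_{{x,y}∈E_n} max(H_n(y),H_n(x))) ≤ exp( β n √(log 2)·(1 + 2 log n/(n log 2)) ). -/
/-!
A union bound over the `2^n n` ordered edges `(x, i)` of the `n`-cube: the two endpoint
energies of an edge are independent `N(0, n)`, so by the sub-Gaussian Chernoff bound both lie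
below `-t` with probability at most `exp (-t² / n)`. For `t = n √(log 2) + 2 log n / √(log 2)`
one has `t² ≥ n² log 2 + 4 n log n`, so the probability that some edge has both endpoints below
`-t` is at most `2^n n ⋅ 2^(-n) n^(-4) = n^(-3)`, which is summable; Borel–Cantelli concludes.
-/

open MeasureTheory ProbabilityTheory Filter Real

noncomputable section

open scoped NNReal

section GaussianTail

variable {Ω : Type*} [MeasurableSpace Ω] {μ : Measure Ω} {X Y : Ω → ℝ} {v : ℝ≥0}

lemma hasSubgaussianMGF_of_map_eq_gaussianReal (hX : μ.map X = gaussianReal 0 v) :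
    HasSubgaussianMGF X v μ := by
  have hXm : AEMeasurable X μ := aemeasurable_of_map_neZero (by rw [hX]; infer_instance)
  refine (HasSubgaussianMGF.id_map_iff hXm).1 ⟨fun t => ?_, fun t => ?_⟩
  · rw [hX]
    exact integrable_exp_mul_gaussianReal t
  · simp [hX, mgf_id_gaussianReal]

lemma measureReal_lt_neg_le_of_map_eq_gaussianReal [IsFiniteMeasure μ]
    (hX : μ.map X = gaussianReal 0 v) {t : ℝ} (ht : 0 ≤ t) :
    μ.real {ω | X ω < -t} ≤ exp (-t ^ 2 / (2 * v)) :=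
  calc μ.real {ω | X ω < -t} ≤ μ.real {ω | t ≤ (-X) ω} :=
        measureReal_mono fun ω (h : X ω < -t) => by
          change t ≤ -X ω; linarith
    _ ≤ exp (-t ^ 2 / (2 * v)) :=
        (hasSubgaussianMGF_of_map_eq_gaussianReal hX).neg.measure_ge_le ht

lemma ProbabilityTheory.IndepFun.measureReal_lt_neg_and_lt_neg_le [IsFiniteMeasure μ]
    (hXY : IndepFun X Y μ) (hX : μ.map X = gaussianReal 0 v)
    (hY : μ.map Y = gaussianReal 0 v) {t : ℝ} (ht : 0 ≤ t) :
    μ.real {ω | X ω < -t ∧ Y ω < -t} ≤ exp (-t ^ 2 / v) := by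
  have hprod : μ.real {ω | X ω < -t ∧ Y ω < -t} =
      μ.real {ω | X ω < -t} * μ.real {ω | Y ω < -t} := by
    rw [measureReal_def, measureReal_def, measureReal_def, ← ENNReal.toReal_mul]
    exact congrArg ENNReal.toReal
      (hXY.measure_inter_preimage_eq_mul _ _ measurableSet_Iio measurableSet_Iio)
  rw [hprod, show -t ^ 2 / (v : ℝ) = -t ^ 2 / (2 * v) + -t ^ 2 / (2 * v) by ring, exp_add]
  exact mul_le_mul (measureReal_lt_neg_le_of_map_eq_gaussianReal hX ht)
    (measureReal_lt_neg_le_of_map_eq_gaussianReal hY ht) measureReal_nonneg (exp_nonneg _)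

end GaussianTail

lemma exists_eq_update_of_hammingDist_eq_one {ι β : Type*} [Fintype ι] [DecidableEq ι]
    [DecidableEq β] {x y : ι → β} (h : hammingDist x y = 1) :
    ∃ i, x i ≠ y i ∧ y = Function.update x i (y i) := by
  obtain ⟨i, hi⟩ := Finset.card_eq_one.mp h
  have hne : ∀ j, x j ≠ y j ↔ j = i := by simpa [Finset.ext_iff] using hi
  refine ⟨i, (hne i).2 rfl, funext fun j => ?_⟩
  by_cases hj : j = i
  · subst hj
    simp
  · rw [Function.update_of_ne hj]
    exact (not_not.mp (mt (hne j).1 hj)).symm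

lemma hypercube_adj_exists_eq_update {n : ℕ} {x y : Fin n → Bool} (h : (hypercube n).Adj x y) :
    ∃ i, y = Function.update x i (!x i) := by
  obtain ⟨i, hne, hy⟩ := exists_eq_update_of_hammingDist_eq_one h
  exact ⟨i, Bool.eq_not_iff.2 hne.symm ▸ hy⟩

def edgeThreshold (n : ℕ) : ℝ := n * √(log 2) + 2 * log n / √(log 2)

lemma edgeThreshold_nonneg (n : ℕ) : 0 ≤ edgeThreshold n := by
  have := log_natCast_nonneg n
  unfold edgeThreshold
  positivity

lemma le_sq_edgeThreshold (n : ℕ) : n ^ 2 * log 2 + 4 * n * log n ≤ edgeThreshold n ^ 2 := by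
  have hs : 0 < √(log 2) := sqrt_pos.2 (log_pos one_lt_two)
  have hcross : 2 * (n * √(log 2)) * (2 * log n / √(log 2)) = 4 * n * log n := by
    field_simp
    ring
  unfold edgeThreshold
  nlinarith [sq_sqrt (log_pos one_lt_two).le, sq_nonneg (2 * log n / √(log 2))]

lemma two_pow_mul_mul_exp_neg_edgeThreshold_le (n : ℕ) :
    2 ^ n * n * exp (-edgeThreshold n ^ 2 / n) ≤ ((n : ℝ) ^ 3)⁻¹ := by
  rcases Nat.eq_zero_or_pos n with rfl | hn
  · simp -- both sides vanish, the right one because `0⁻¹ = 0`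
  have hn' : (0 : ℝ) < n := Nat.cast_pos.2 hn
  have hexp : exp (-edgeThreshold n ^ 2 / n) ≤ exp (-(n * log 2 + 4 * log n)) := by
    rw [exp_le_exp, div_le_iff₀ hn']
    nlinarith [le_sq_edgeThreshold n]
  have hval : exp (-(n * log 2 + 4 * log n)) = (2 ^ n * (n : ℝ) ^ 4)⁻¹ := by
    rw [exp_neg, exp_add, exp_nat_mul, exp_log two_pos,
      show (4 : ℝ) * log n = (4 : ℕ) * log n by norm_num, exp_nat_mul, exp_log hn']
  calc 2 ^ n * n * exp (-edgeThreshold n ^ 2 / n) ≤ 2 ^ n * n * (2 ^ n * (n : ℝ) ^ 4)⁻¹ := by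
        rw [← hval]; gcongr
    _ = ((n : ℝ) ^ 3)⁻¹ := by field_simp

lemma ae_eventually_notMem_of_measureReal_le {α : Type*} [MeasurableSpace α] {μ : Measure α}
    [IsFiniteMeasure μ] {s : ℕ → Set α} {f : ℕ → ℝ} (hs : ∀ n, μ.real (s n) ≤ f n)
    (hf : Summable f) : ∀ᵐ a ∂μ, ∀ᶠ n in atTop, a ∉ s n := by
  refine ae_eventually_notMem (ne_top_of_le_ne_top (ENNReal.ofReal_ne_top (r := ∑' n, f n)) ?_)
  rw [ENNReal.ofReal_tsum_of_nonneg (fun n => measureReal_nonneg.trans (hs n)) hf]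
  refine ENNReal.tsum_le_tsum fun n => ?_
  rw [← ofReal_measureReal]
  exact ENNReal.ofReal_le_ofReal (hs n)

section LowEdge

variable {Ω : Type*} (H : (n : ℕ) → (Fin n → Bool) → Ω → ℝ)

def lowEdgeEvent (n : ℕ) (t : ℝ) : Set Ω :=
  ⋃ (x : Fin n → Bool) (i : Fin n),
    {ω | H n x ω < -t ∧ H n (Function.update x i (!x i)) ω < -t}

lemma mem_lowEdgeEvent_of_adj {n : ℕ} {x y : Fin n → Bool} {t : ℝ} {ω : Ω}
    (hxy : (hypercube n).Adj x y) (h : max (H n x ω) (H n y ω) < -t) :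
    ω ∈ lowEdgeEvent H n t := by
  obtain ⟨i, rfl⟩ := hypercube_adj_exists_eq_update hxy
  exact Set.mem_iUnion₂.2 ⟨x, i, max_lt_iff.1 h⟩

lemma measureReal_lowEdgeEvent_edgeThreshold_le [MeasurableSpace Ω] (P : Measure Ω)
    [IsFiniteMeasure P] (hgauss : ∀ n x, Measure.map (H n x) P = gaussianReal 0 n)
    (hindep : iIndepFun (fun p : (Σ n : ℕ, (Fin n → Bool)) => H p.1 p.2) P) (n : ℕ) :
    P.real (lowEdgeEvent H n (edgeThreshold n)) ≤ ((n : ℝ) ^ 3)⁻¹ := by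
  have hedge : ∀ (x : Fin n → Bool) (i : Fin n),
      P.real {ω | H n x ω < -edgeThreshold n ∧
        H n (Function.update x i (!x i)) ω < -edgeThreshold n} ≤
        exp (-edgeThreshold n ^ 2 / n) := by
    intro x i
    have hne :
        (⟨n, x⟩ : Σ n : ℕ, (Fin n → Bool)) ≠ ⟨n, Function.update x i (!x i)⟩ :=
      fun h => by simpa using congrFun (sigma_mk_injective h) i
    simpa using (hindep.indepFun hne).measureReal_lt_neg_and_lt_neg_le (hgauss n x)
      (hgauss n _) (edgeThreshold_nonneg n)
  calc P.real (lowEdgeEvent H n (edgeThreshold n))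
      ≤ ∑ x : Fin n → Bool, ∑ i : Fin n, P.real {ω | H n x ω < -edgeThreshold n ∧
          H n (Function.update x i (!x i)) ω < -edgeThreshold n} :=
        (measureReal_iUnion_fintype_le _).trans
          (Finset.sum_le_sum fun x _ => measureReal_iUnion_fintype_le _)
    _ ≤ ∑ _x : Fin n → Bool, ∑ _i : Fin n, exp (-edgeThreshold n ^ 2 / n) :=
        Finset.sum_le_sum fun x _ => Finset.sum_le_sum fun i _ => hedge x i
    _ = 2 ^ n * n * exp (-edgeThreshold n ^ 2 / n) := by simp [mul_assoc]
    _ ≤ ((n : ℝ) ^ 3)⁻¹ := two_pow_mul_mul_exp_neg_edgeThreshold_le n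

end LowEdge

theorem edge_min_energy_bound_general
    {Ω : Type*} [MeasurableSpace Ω] (P : Measure Ω) [IsProbabilityMeasure P]
    (H : (n : ℕ) → (Fin n → Bool) → Ω → ℝ)
    (hgauss : ∀ n x, Measure.map (H n x) P = gaussianReal 0 n)
    (hindep : iIndepFun
      (fun p : (Σ n : ℕ, (Fin n → Bool)) => H p.1 p.2) P) :
    ∀ᵐ ω ∂P, ∀ᶠ n : ℕ in atTop,
      ∀ x y : Fin n → Bool, (hypercube n).Adj x y →
        -((n : ℝ) * Real.sqrt (Real.log 2) + 2 * Real.log n / Real.sqrt (Real.log 2))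
          ≤ max (H n x ω) (H n y ω) := by
  filter_upwards [ae_eventually_notMem_of_measureReal_le
    (measureReal_lowEdgeEvent_edgeThreshold_le H P hgauss hindep)
    (Real.summable_nat_pow_inv.2 (by norm_num))] with ω hω
  filter_upwards [hω] with n hn x y hxy
  by_contra! hlow
  exact hn (mem_lowEdgeEvent_of_adj H hxy hlow)

theorem edge_min_energy_bound
    {Ω : Type*} [MeasurableSpace Ω] (P : Measure Ω) [IsProbabilityMeasure P]
    (H : (n : ℕ) → (Fin n → Bool) → Ω → ℝ)
    (hmeas : ∀ n x, Measurable (H n x))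
    (hgauss : ∀ n x, Measure.map (H n x) P = gaussianReal 0 n)
    (hindep : iIndepFun
      (fun p : (Σ n : ℕ, (Fin n → Bool)) => H p.1 p.2) P)
    (β : ℝ) (hβ : 0 < β) :
    ∀ᵐ ω ∂P, ∀ᶠ n : ℕ in atTop,
      ∀ x y : Fin n → Bool, (hypercube n).Adj x y →
        -((n : ℝ) * Real.sqrt (Real.log 2) + 2 * Real.log n / Real.sqrt (Real.log 2))
          ≤ max (H n x ω) (H n y ω) :=
  edge_min_energy_bound_general P H hgauss hindep
end
end

section
/- There exists a constant K < ∞ (depending only on β and ε) such that for every sequence ε'_n of positive reals satisfying 1/α(ε) − 1 − (log ε'_n)/(n·β·β_c(ε)) > 0 for all n, for all sufficiently large n one has E[ 2^{εn}·c_n^{−1}·τ_n(x)·1{ c_n^{−1} τ_n(x) ≤ ε'_n } ] ≤ K · (ε'_n)^{ 1 − α_n(ε) − (log ε'_n)/(2nβ²) } / ( 1/α(ε) − 1 − (log ε'_n)/(n β β_c(ε)) ), where α_n(ε) = (nβ²)^{−1} log c_n. -/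
/-! Let `φ` be the density of `H ~ N(0, n)` and `s = log c_n / β`. The normalisation of `c_n`
says (by symmetry) that `ℙ(H > s) = 2^{-εn}`. Mills' ratio bounds
`n s / (s² + n) φ(s) ≤ ℙ(H > s) ≤ (n / s) φ(s)` then force `√n ≤ s ≤ n β_c` and
`2^{εn} ≤ (β_c + 1) / φ(s)`. Exponential tilting turns the truncated moment into
`2^{εn} c_n⁻¹ e^{β²n/2} ℙ(H > t)` with `t = βn - s - log ε'_n / β`, which is at least
`n β_c D_n` for the denominator `D_n` of the statement. A last Mills bound at `t` and completing
the square give the claim with `K = (β_c + 1) / β_c`. -/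

open MeasureTheory ProbabilityTheory Filter Real

noncomputable section

open Set
open scoped NNReal Topology

namespace ProbabilityTheory

variable {v : ℝ≥0}

lemma hasDerivAt_gaussianPDFReal_zero (hv : v ≠ 0) (x : ℝ) :
    HasDerivAt (gaussianPDFReal 0 v) (-(x / v) * gaussianPDFReal 0 v x) x := by
  have hexp : HasDerivAt (fun y : ℝ => -(y - 0) ^ 2 / (2 * v)) (-(x / v)) x := by
    refine ((((hasDerivAt_id x).sub_const 0).pow 2).neg.div_const (2 * (v : ℝ))).congr_deriv ?_
    field_simp
    simp
  rw [gaussianPDFReal_def]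
  refine (hexp.exp.const_mul (√(2 * π * v))⁻¹).congr_deriv ?_
  ring

lemma tendsto_gaussianPDFReal_atTop (μ : ℝ) :
    Tendsto (gaussianPDFReal μ v) atTop (𝓝 0) := by
  rcases eq_or_ne v 0 with rfl | hv
  · rw [gaussianPDFReal_zero_var]
    exact tendsto_const_nhds
  have h : Tendsto (fun x => -(x - μ) ^ 2 / (2 * v)) atTop atBot := by
    refine Tendsto.atBot_div_const (by positivity) (tendsto_neg_atTop_atBot.comp ?_)
    exact (tendsto_pow_atTop two_ne_zero).comp (tendsto_atTop_add_const_right _ (-μ) tendsto_id)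
  rw [gaussianPDFReal_def]
  simpa only [mul_zero, Function.comp_def] using
    (tendsto_exp_atBot.comp h).const_mul (√(2 * π * v))⁻¹

lemma measureReal_Ioi_gaussianReal (hv : v ≠ 0) (t : ℝ) :
    (gaussianReal 0 v).real (Ioi t) = ∫ x in Ioi t, gaussianPDFReal 0 v x := by
  rw [measureReal_def, gaussianReal_apply_eq_integral 0 hv,
    ENNReal.toReal_ofReal (integral_nonneg fun x => gaussianPDFReal_nonneg 0 v x)]

lemma measureReal_Ioi_gaussianReal_le (hv : v ≠ 0) {t : ℝ} (ht : 0 < t) :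
    (gaussianReal 0 v).real (Ioi t) ≤ v / t * gaussianPDFReal 0 v t := by
  set g : ℝ → ℝ := fun x => -(v / t) * gaussianPDFReal 0 v x
  set g' : ℝ → ℝ := fun x => x / t * gaussianPDFReal 0 v x
  have hderiv : ∀ x ∈ Ioi t, HasDerivAt g (g' x) x := fun x _ =>
    ((hasDerivAt_gaussianPDFReal_zero hv x).const_mul _).congr_deriv (by simp only [g']; field_simp)
  have hcont : ContinuousWithinAt g (Ici t) t :=
    ((hasDerivAt_gaussianPDFReal_zero hv t).continuousAt.const_mul _).continuousWithinAt
  have htendsto : Tendsto g atTop (𝓝 0) := by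
    simpa only [mul_zero] using
      (tendsto_gaussianPDFReal_atTop (v := v) 0).const_mul (-(v / t : ℝ))
  have hg'_nonneg : ∀ x ∈ Ioi t, 0 ≤ g' x := fun x hx =>
    mul_nonneg (div_nonneg (ht.trans hx).le ht.le) (gaussianPDFReal_nonneg 0 v x)
  have hint := integrableOn_Ioi_deriv_of_nonneg hcont hderiv hg'_nonneg htendsto
  calc (gaussianReal 0 v).real (Ioi t) ≤ ∫ x in Ioi t, g' x := by
        rw [measureReal_Ioi_gaussianReal hv]
        refine setIntegral_mono_on (integrable_gaussianPDFReal 0 v).integrableOn hint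
          measurableSet_Ioi fun x hx => ?_
        exact le_mul_of_one_le_left (gaussianPDFReal_nonneg 0 v x)
          ((one_le_div ht).2 (le_of_lt hx))
    _ = v / t * gaussianPDFReal 0 v t := by
        rw [integral_Ioi_of_hasDerivAt_of_tendsto hcont hderiv hint htendsto]
        ring

lemma le_measureReal_Ioi_gaussianReal (hv : v ≠ 0) (s : ℝ) :
    v * s / (s ^ 2 + v) * gaussianPDFReal 0 v s ≤ (gaussianReal 0 v).real (Ioi s) := by
  have hv' : (0 : ℝ) < v := by positivity
  set g : ℝ → ℝ := fun x => -(v * x / (x ^ 2 + v)) * gaussianPDFReal 0 v x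
  set g' : ℝ → ℝ := fun x => (1 - 2 * v ^ 2 / (x ^ 2 + v) ^ 2) * gaussianPDFReal 0 v x
  have hderiv : ∀ x, HasDerivAt g (g' x) x := by
    intro x
    have hx : x ^ 2 + v ≠ 0 := by positivity
    have hq := ((hasDerivAt_id x).const_mul (v : ℝ)).div
        ((hasDerivAt_pow 2 x).add_const (v : ℝ)) hx
    refine (hq.neg.mul (hasDerivAt_gaussianPDFReal_zero hv x)).congr_deriv ?_
    simp only [g', id_eq, Pi.neg_apply, Pi.div_apply]
    field_simp
    ring
  have hg'_le : ∀ x, |g' x| ≤ gaussianPDFReal 0 v x := by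
    intro x
    rw [abs_mul, abs_of_nonneg (gaussianPDFReal_nonneg 0 v x)]
    refine mul_le_of_le_one_left (gaussianPDFReal_nonneg 0 v x) (abs_le.2 ⟨?_, ?_⟩)
    · rw [neg_le_sub_iff_le_add, div_le_iff₀ (by positivity)]
      nlinarith [sq_nonneg x, sq_nonneg (x ^ 2)]
    · have : 0 ≤ 2 * (v : ℝ) ^ 2 / (x ^ 2 + v) ^ 2 := by positivity
      linarith
  have hint : IntegrableOn g' (Ioi s) := by
    refine (Integrable.mono (integrable_gaussianPDFReal 0 v) ?_
      (ae_of_all _ fun x => ?_)).integrableOn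
    · exact Measurable.aestronglyMeasurable (by unfold g'; fun_prop)
    · rw [norm_eq_abs, norm_of_nonneg (gaussianPDFReal_nonneg 0 v x)]
      exact hg'_le x
  have hrat : Tendsto (fun x : ℝ => v * x / (x ^ 2 + v)) atTop (𝓝 0) := by
    refine squeeze_zero' (eventually_ge_atTop 0 |>.mono fun x hx => by positivity)
      (eventually_gt_atTop 0 |>.mono fun x hx => ?_)
      (tendsto_const_nhds (x := (v : ℝ)).div_atTop tendsto_id)
    rw [id, div_le_div_iff₀ (by positivity) hx]
    nlinarith [sq_nonneg x]
  have htendsto : Tendsto g atTop (𝓝 0) := by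
    simpa only [neg_zero, zero_mul] using hrat.neg.mul (tendsto_gaussianPDFReal_atTop (v := v) 0)
  calc v * s / (s ^ 2 + v) * gaussianPDFReal 0 v s = ∫ x in Ioi s, g' x := by
        rw [integral_Ioi_of_hasDerivAt_of_tendsto (hderiv s).continuousAt.continuousWithinAt
          (fun x _ => hderiv x) hint htendsto]
        ring
    _ ≤ (gaussianReal 0 v).real (Ioi s) := by
        rw [measureReal_Ioi_gaussianReal hv]
        exact setIntegral_mono_on hint (integrable_gaussianPDFReal 0 v).integrableOn
          measurableSet_Ioi fun x _ => (le_abs_self _).trans (hg'_le x)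

lemma sqrt_le_of_measureReal_Ioi_gaussianReal_lt (hv : v ≠ 0) {s : ℝ}
    (hs : (gaussianReal 0 v).real (Ioi s) < exp (-(1 / 2)) / (2 * √(2 * π))) : √v ≤ s := by
  by_contra! h
  have hv' : (0 : ℝ) < v := by positivity
  have hsqrt : 0 < √(v : ℝ) := sqrt_pos.2 hv'
  have hval : v * √v / (√v ^ 2 + v) * gaussianPDFReal 0 v √v =
      exp (-(1 / 2)) / (2 * √(2 * π)) := by
    rw [gaussianPDFReal, sq_sqrt hv'.le, sub_zero, sq_sqrt hv'.le, sqrt_mul' _ hv'.le]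
    field_simp
    ring_nf
  have := (le_measureReal_Ioi_gaussianReal hv √v).trans
    (measureReal_mono (Ioi_subset_Ioi h.le) (measure_ne_top _ _))
  linarith

lemma le_mul_of_exp_le_measureReal_Ioi_gaussianReal (hv : v ≠ 0) {s k : ℝ} (hsv : √v ≤ s)
    (hk : 0 ≤ k) (hs : exp (-(v * k ^ 2 / 2)) ≤ (gaussianReal 0 v).real (Ioi s)) :
    s ≤ v * k := by
  have hv' : (0 : ℝ) < v := by positivity
  have hsqrt : 0 < √(v : ℝ) := sqrt_pos.2 hv'
  have hspos : 0 < s := hsqrt.trans_le hsv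
  have hpdf : v / s * gaussianPDFReal 0 v s ≤ exp (-s ^ 2 / (2 * v)) := by
    have hvs : (v : ℝ) / s ≤ √(2 * π * v) := by
      have h2π : 1 ≤ √(2 * π) := one_le_sqrt.2 (by linarith [pi_gt_three])
      rw [div_le_iff₀ hspos, sqrt_mul' _ hv'.le]
      calc (v : ℝ) = √v * √v := (mul_self_sqrt hv'.le).symm
        _ ≤ 1 * √v * s := by rw [one_mul]; exact mul_le_mul_of_nonneg_left hsv hsqrt.le
        _ ≤ √(2 * π) * √v * s := by gcongr
    rw [gaussianPDFReal, sub_zero, ← mul_assoc]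
    refine mul_le_of_le_one_left (exp_pos _).le ?_
    rw [← div_eq_mul_inv, div_le_one (by positivity)]
    exact hvs
  have hexp := exp_le_exp.1 (hs.trans ((measureReal_Ioi_gaussianReal_le hv hspos).trans hpdf))
  have hsq : s ^ 2 ≤ (v * k) ^ 2 := by
    rw [neg_div, neg_le_neg_iff, div_le_iff₀ (by positivity)] at hexp
    nlinarith
  exact (pow_le_pow_iff_left₀ hspos.le (by positivity) two_ne_zero).1 hsq

lemma gaussianPDFReal_le_mul_measureReal_Ioi (hv : 1 ≤ v) {s k : ℝ} (hsv : √v ≤ s)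
    (hsk : s ≤ v * k) :
    gaussianPDFReal 0 v s ≤ (k + 1) * (gaussianReal 0 v).real (Ioi s) := by
  have hv0 : v ≠ 0 := (zero_lt_one.trans_le hv).ne'
  have hv' : (1 : ℝ) ≤ v := by exact_mod_cast hv
  have hs1 : 1 ≤ s := le_trans (by simpa using hv') hsv
  have hk : 0 ≤ k := nonneg_of_mul_nonneg_right (a := (v : ℝ)) (by linarith) (by linarith)
  have hratio : (s ^ 2 + v) / (v * s) ≤ k + 1 := by
    rw [div_le_iff₀ (by positivity)]
    nlinarith
  calc gaussianPDFReal 0 v s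
      = (s ^ 2 + v) / (v * s) * (v * s / (s ^ 2 + v) * gaussianPDFReal 0 v s) := by
        field_simp
    _ ≤ (k + 1) * (gaussianReal 0 v).real (Ioi s) :=
        mul_le_mul hratio (le_measureReal_Ioi_gaussianReal hv0 s)
          (mul_nonneg (by positivity) (gaussianPDFReal_nonneg 0 v s)) (by positivity)

lemma measureReal_Ici_gaussianReal (hv : v ≠ 0) (μ t : ℝ) :
    (gaussianReal μ v).real (Ici t) = (gaussianReal μ v).real (Ioi t) := by
  have := nullSingletonClass_gaussianReal (μ := μ) hv
  exact measureReal_congr Ioi_ae_eq_Ici.symm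

lemma gaussianPDFReal_zero_mul_exp_neg_mul (β x : ℝ) :
    gaussianPDFReal 0 v x * exp (-β * x) =
      exp (β ^ 2 * v / 2) * gaussianPDFReal (-(β * v)) v x := by
  rcases eq_or_ne v 0 with rfl | hv
  · simp
  have hv' : (v : ℝ) ≠ 0 := by positivity
  simp only [gaussianPDFReal, sub_zero, sub_neg_eq_add]
  rw [mul_assoc, ← exp_add, mul_left_comm, ← exp_add]
  congr 2
  field_simp
  ring

lemma integral_indicator_exp_neg_mul_gaussianReal (hv : v ≠ 0) (β b : ℝ) :
    ∫ x, (Ici b).indicator (fun x => exp (-β * x)) x ∂gaussianReal 0 v =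
      exp (β ^ 2 * v / 2) * (gaussianReal 0 v).real (Ioi (b + β * v)) := by
  have hshift : HasLaw (fun x => x - β * v) (gaussianReal (-(β * v)) v) (gaussianReal 0 v) := by
    have := gaussianReal_sub_const (HasLaw.id (μ := gaussianReal 0 v)) (β * v)
    rwa [zero_sub] at this
  have hset : {x : ℝ | b ≤ x - β * v} = Ici (b + β * v) := by
    ext x; simp [le_sub_iff_add_le]
  calc ∫ x, (Ici b).indicator (fun x => exp (-β * x)) x ∂gaussianReal 0 v
      = ∫ x in Ici b, exp (β ^ 2 * v / 2) * gaussianPDFReal (-(β * v)) v x := by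
        rw [integral_gaussianReal_eq_integral_smul hv, ← integral_indicator measurableSet_Ici]
        congr 1 with x
        by_cases hx : x ∈ Ici b
        · rw [indicator_of_mem hx, indicator_of_mem hx, smul_eq_mul,
            gaussianPDFReal_zero_mul_exp_neg_mul]
        · rw [indicator_of_notMem hx, indicator_of_notMem hx, smul_zero]
    _ = exp (β ^ 2 * v / 2) * (gaussianReal (-(β * v)) v).real (Ici b) := by
        rw [integral_const_mul, measureReal_def, gaussianReal_apply_eq_integral _ hv,
          ENNReal.toReal_ofReal (integral_nonneg fun x => gaussianPDFReal_nonneg _ v x)]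
    _ = exp (β ^ 2 * v / 2) * (gaussianReal 0 v).real (Ioi (b + β * v)) := by
        rw [← measureReal_Ici_gaussianReal hv, ← hset]
        congr 1
        exact (hshift.measureReal_eq (p := (b ≤ ·)) measurableSet_Ici).symm

lemma gaussianPDFReal_zero_div (hv : v ≠ 0) (s t : ℝ) :
    gaussianPDFReal 0 v t / gaussianPDFReal 0 v s = exp ((s ^ 2 - t ^ 2) / (2 * v)) := by
  have : (√(2 * π * v))⁻¹ ≠ 0 := by positivity
  rw [gaussianPDFReal, gaussianPDFReal, mul_div_mul_left _ _ this, ← exp_sub]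
  congr 1
  ring

variable {Ω : Type*} [MeasurableSpace Ω] {P : Measure Ω} {X : Ω → ℝ}

lemma measureReal_le_exp_neg_mul_of_hasLaw_gaussianReal (hX : HasLaw X (gaussianReal 0 v) P)
    (hv : v ≠ 0) {β c : ℝ} (hβ : 0 < β) (hc : 0 < c) :
    P.real {ω | c ≤ exp (-β * X ω)} = (gaussianReal 0 v).real (Ioi (log c / β)) := by
  have hset : {ω | c ≤ exp (-β * X ω)} = {ω | log c / β ≤ (-X) ω} := by
    ext ω
    rw [mem_ofPred_eq, mem_ofPred_eq, ← log_le_iff_le_exp hc, div_le_iff₀ hβ, Pi.neg_apply]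
    constructor <;> intro h <;> linarith
  rw [hset, (gaussianReal_neg hX).measureReal_eq (p := (log c / β ≤ ·)) measurableSet_Ici,
    neg_zero]
  exact measureReal_Ici_gaussianReal hv 0 _

lemma integral_ite_exp_neg_mul_of_hasLaw_gaussianReal (hX : HasLaw X (gaussianReal 0 v) P)
    (hv : v ≠ 0) {β a e : ℝ} (hβ : 0 < β) (ha : 0 < a) (he : 0 < e) (A : ℝ) :
    ∫ ω, (if a * exp (-β * X ω) ≤ e then A * (a * exp (-β * X ω)) else 0) ∂P =
      A * a * exp (β ^ 2 * v / 2) *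
        (gaussianReal 0 v).real (Ioi ((log a - log e) / β + β * v)) := by
  have hcond : ∀ x, a * exp (-β * x) ≤ e ↔ x ∈ Ici ((log a - log e) / β) := by
    intro x
    rw [← log_le_log_iff (by positivity) he, log_mul ha.ne' (exp_pos _).ne', log_exp,
      mem_Ici, div_le_iff₀ hβ]
    constructor <;> intro h <;> linarith
  have hintegrand :
      (fun ω => if a * exp (-β * X ω) ≤ e then A * (a * exp (-β * X ω)) else 0) =
      fun ω => A * a * (Ici ((log a - log e) / β)).indicator (fun x => exp (-β * x)) (X ω) := by
    ext ω
    by_cases h : a * exp (-β * X ω) ≤ e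
    · rw [if_pos h, indicator_of_mem ((hcond _).1 h), mul_assoc]
    · rw [if_neg h, indicator_of_notMem (mt (hcond _).2 h), mul_zero]
  rw [hintegrand, integral_const_mul, mul_assoc (A * a)]
  congr 1
  refine (hX.integral_comp ?_).trans (integral_indicator_exp_neg_mul_gaussianReal hv β _)
  exact (Measurable.indicator (by fun_prop) measurableSet_Ici).aestronglyMeasurable

end ProbabilityTheory

/-- In the application `L = log c_n`, `M = log ε'_n`, `k = β_c` and `v = n`. -/
lemma exp_mul_measureReal_Ioi_gaussianReal_le {v : ℝ≥0} (hv : 1 ≤ v) {β k L M : ℝ}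
    (hβ : 0 < β) (hk : 0 < k) (hD : 0 < β / k - 1 - M / (v * β * k))
    (hs : (gaussianReal 0 v).real (Ioi (L / β)) = exp (-(v * k ^ 2 / 2)))
    (hsmall : exp (-(v * k ^ 2 / 2)) < exp (-(1 / 2)) / (2 * √(2 * π))) :
    exp (v * k ^ 2 / 2) * exp (-L) * exp (β ^ 2 * v / 2) *
        (gaussianReal 0 v).real (Ioi ((-L - M) / β + β * v)) ≤
      (k + 1) / k * exp ((1 - L / (v * β ^ 2) - M / (2 * v * β ^ 2)) * M) /
        (β / k - 1 - M / (v * β * k)) := by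
  have hv0 : v ≠ 0 := (zero_lt_one.trans_le hv).ne'
  have hv' : (0 : ℝ) < v := by positivity
  set s := L / β with hs_def
  set D := β / k - 1 - M / (v * β * k) with hD_def
  set t := (-L - M) / β + β * v with ht_def
  have hsv : √v ≤ s := sqrt_le_of_measureReal_Ioi_gaussianReal_lt hv0 (hs ▸ hsmall)
  have hsk : s ≤ v * k := le_mul_of_exp_le_measureReal_Ioi_gaussianReal hv0 hsv hk.le hs.ge
  have hts : t = β * v - s - M / β := by
    rw [ht_def, hs_def]
    field_simp
    ring
  have hDt : v * k * D = β * v - v * k - M / β := by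
    rw [hD_def]
    field_simp
  have htpos : 0 < t := lt_of_lt_of_le (by positivity) (show v * k * D ≤ t by linarith)
  have hpdf_s : exp (v * k ^ 2 / 2) ≤ (k + 1) / gaussianPDFReal 0 v s := by
    rw [le_div_iff₀ (gaussianPDFReal_pos 0 v s hv0)]
    calc exp (v * k ^ 2 / 2) * gaussianPDFReal 0 v s
        ≤ exp (v * k ^ 2 / 2) * ((k + 1) * exp (-(v * k ^ 2 / 2))) := by
          rw [← hs]
          exact mul_le_mul_of_nonneg_left (gaussianPDFReal_le_mul_measureReal_Ioi hv hsv hsk)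
            (exp_pos _).le
      _ = k + 1 := by rw [mul_left_comm, ← exp_add, add_neg_cancel, exp_zero, mul_one]
  have htail : (gaussianReal 0 v).real (Ioi t) ≤ gaussianPDFReal 0 v t / (k * D) := by
    have hvt : v / t ≤ 1 / (k * D) := by
      rw [div_le_div_iff₀ htpos (by positivity)]
      linarith
    calc (gaussianReal 0 v).real (Ioi t) ≤ v / t * gaussianPDFReal 0 v t :=
          measureReal_Ioi_gaussianReal_le hv0 htpos
      _ ≤ 1 / (k * D) * gaussianPDFReal 0 v t :=
          mul_le_mul_of_nonneg_right hvt (gaussianPDFReal_nonneg 0 v t)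
      _ = gaussianPDFReal 0 v t / (k * D) := by ring
  have hexponent : exp (-L) * exp (β ^ 2 * v / 2) *
      (gaussianPDFReal 0 v t / gaussianPDFReal 0 v s) =
      exp ((1 - L / (v * β ^ 2) - M / (2 * v * β ^ 2)) * M) := by
    rw [gaussianPDFReal_zero_div hv0, ← exp_add, ← exp_add, hts, hs_def]
    congr 1
    field_simp
    ring
  calc exp (v * k ^ 2 / 2) * exp (-L) * exp (β ^ 2 * v / 2) * (gaussianReal 0 v).real (Ioi t)
      ≤ (k + 1) / gaussianPDFReal 0 v s * exp (-L) * exp (β ^ 2 * v / 2) *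
          (gaussianPDFReal 0 v t / (k * D)) := by
        have hpos := gaussianPDFReal_pos 0 v s hv0
        refine mul_le_mul (by gcongr) htail measureReal_nonneg ?_
        exact (mul_pos (mul_pos (div_pos (by positivity) hpos) (exp_pos _)) (exp_pos _)).le
    _ = (k + 1) / k * (exp (-L) * exp (β ^ 2 * v / 2) *
          (gaussianPDFReal 0 v t / gaussianPDFReal 0 v s)) / D := by
        field_simp
    _ = _ := by rw [hexponent]

theorem truncated_first_moment_bound_general
    {Ω : Type*} [MeasurableSpace Ω] (P : Measure Ω) [IsProbabilityMeasure P]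
    (H : (n : ℕ) → (Fin n → Bool) → Ω → ℝ)
    (hmeas : ∀ n x, Measurable (H n x))
    (hgauss : ∀ n x, Measure.map (H n x) P = gaussianReal 0 n)
    (β : ℝ) (hβ : 0 < β)
    (ε : ℝ) (hε0 : 0 < ε)
    (c : ℕ → ℝ)
    (hc : ∀ n, 1 ≤ n → ∀ x : Fin n → Bool, 0 < c n ∧
      (2 : ℝ) ^ (ε * n) * (P {ω | c n ≤ Real.exp (-β * H n x ω)}).toReal = 1) :
    ∃ K : ℝ, ∀ εp : ℕ → ℝ, (∀ n, 0 < εp n) →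
      (∀ n, 1 ≤ n → 0 < β / Real.sqrt (2 * ε * Real.log 2) - 1 -
          Real.log (εp n) / (n * β * Real.sqrt (2 * ε * Real.log 2))) →
      ∀ᶠ n : ℕ in atTop, ∀ x : Fin n → Bool,
        (∫ ω, (if (c n)⁻¹ * Real.exp (-β * H n x ω) ≤ εp n then
            (2 : ℝ) ^ (ε * n) * ((c n)⁻¹ * Real.exp (-β * H n x ω)) else 0) ∂P)
          ≤ K * (εp n) ^ (1 - Real.log (c n) / (n * β ^ 2) -
                Real.log (εp n) / (2 * n * β ^ 2)) /
              (β / Real.sqrt (2 * ε * Real.log 2) - 1 -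
                Real.log (εp n) / (n * β * Real.sqrt (2 * ε * Real.log 2))) := by
  set k := √(2 * ε * log 2)
  have hk : 0 < k := sqrt_pos.2 (by have := log_pos one_lt_two; positivity)
  have hpow : ∀ n : ℕ, (2 : ℝ) ^ (ε * n) = exp (n * k ^ 2 / 2) := fun n => by
    rw [rpow_def_of_pos two_pos, sq_sqrt (by have := log_pos one_lt_two; positivity)]
    ring_nf
  have hsmall :
      ∀ᶠ n : ℕ in atTop, exp (-(n * k ^ 2 / 2)) < exp (-(1 / 2)) / (2 * √(2 * π)) := by
    have : Tendsto (fun n : ℕ => -((n : ℝ) * k ^ 2 / 2)) atTop atBot :=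
      tendsto_neg_atTop_atBot.comp
        ((tendsto_natCast_atTop_atTop.atTop_mul_const (by positivity)).atTop_div_const two_pos)
    exact (tendsto_exp_atBot.comp this).eventually (gt_mem_nhds (by positivity))
  refine ⟨(k + 1) / k, fun εp hεp hD => ?_⟩
  filter_upwards [eventually_ge_atTop 1, hsmall] with n hn hn_small x
  have hv : (n : ℝ≥0) ≠ 0 := by positivity
  have hX : HasLaw (H n x) (gaussianReal 0 n) P := ⟨(hmeas n x).aemeasurable, hgauss n x⟩
  obtain ⟨hc0, hcP⟩ := hc n hn x
  rw [← measureReal_def, measureReal_le_exp_neg_mul_of_hasLaw_gaussianReal hX hv hβ hc0,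
    hpow] at hcP
  have hinv : (c n)⁻¹ = exp (-log (c n)) := by rw [exp_neg, exp_log hc0]
  rw [integral_ite_exp_neg_mul_of_hasLaw_gaussianReal hX hv hβ (inv_pos.2 hc0) (hεp n), log_inv,
    hinv, hpow, rpow_def_of_pos (hεp n), mul_comm (log (εp n))]
  have := exp_mul_measureReal_Ioi_gaussianReal_le (v := n) (by exact_mod_cast hn) hβ hk
    (by simpa only [NNReal.coe_natCast] using hD n hn)
    (by simpa only [NNReal.coe_natCast, exp_neg] using eq_inv_of_mul_eq_one_right hcP)
    (by simpa only [NNReal.coe_natCast] using hn_small)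
  simpa only [NNReal.coe_natCast] using this

theorem truncated_first_moment_bound
    {Ω : Type*} [MeasurableSpace Ω] (P : Measure Ω) [IsProbabilityMeasure P]
    (H : (n : ℕ) → (Fin n → Bool) → Ω → ℝ)
    (hmeas : ∀ n x, Measurable (H n x))
    (hgauss : ∀ n x, Measure.map (H n x) P = gaussianReal 0 n)
    (hindep : iIndepFun
      (fun p : (Σ n : ℕ, (Fin n → Bool)) => H p.1 p.2) P)
    (β : ℝ) (hβ : 0 < β)
    (ε : ℝ) (hε0 : 0 < ε) (hε1 : ε < 1)
    (c : ℕ → ℝ)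
    (hc : ∀ n, 1 ≤ n → ∀ x : Fin n → Bool, 0 < c n ∧
      (2 : ℝ) ^ (ε * n) * (P {ω | c n ≤ Real.exp (-β * H n x ω)}).toReal = 1) :
    ∃ K : ℝ, ∀ εp : ℕ → ℝ, (∀ n, 0 < εp n) →
      (∀ n, 1 ≤ n → 0 < β / Real.sqrt (2 * ε * Real.log 2) - 1 -
          Real.log (εp n) / (n * β * Real.sqrt (2 * ε * Real.log 2))) →
      ∀ᶠ n : ℕ in atTop, ∀ x : Fin n → Bool,
        (∫ ω, (if (c n)⁻¹ * Real.exp (-β * H n x ω) ≤ εp n then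
            (2 : ℝ) ^ (ε * n) * ((c n)⁻¹ * Real.exp (-β * H n x ω)) else 0) ∂P)
          ≤ K * (εp n) ^ (1 - Real.log (c n) / (n * β ^ 2) -
                Real.log (εp n) / (2 * n * β ^ 2)) /
              (β / Real.sqrt (2 * ε * Real.log 2) - 1 -
                Real.log (εp n) / (n * β * Real.sqrt (2 * ε * Real.log 2))) :=
  truncated_first_moment_bound_general P H hmeas hgauss β hβ ε hε0 c hc
end
end

section
/- There exists a constant K' < ∞ (depending only on β and ε) such that for every sequence ε'_n of positive reals satisfying 2/α(ε) − 1 − (log ε'_n)/(n·β·β_c(ε)) > 0 for all n, for all sufficiently large n one has E[ ( 2^{εn}·c_n^{−1}·τ_n(x)·1{ c_n^{−1} τ_n(x) ≤ ε'_n } )² ] ≤ K' · 2^{εn} · (ε'_n)^{ 2 − α_n(ε) − (log ε'_n)/(2nβ²) } / ( 2/α(ε) − 1 − (log ε'_n)/(n β β_c(ε)) ), where α_n(ε) = (nβ²)^{−1} log c_n. -/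
/-!
Under the law `N(0, n)` of `H`, the truncation event is the half-line `{H ≥ a}`, and the
exponential tilt by `e^{-2βH}` turns the truncated second moment into `e^{2β²n}` times the
Gaussian tail at `u = 2βn - (log c_n + log ε'_n) / β`. The normalisation of `c_n` says that the
tail at `w = log c_n / β` is `2^{-εn}`; since this tends to `0` and equals `e^{-(nβ_c)² / 2n}`,
we get `√n ≤ w ≤ nβ_c` for large `n`. The Mills-ratio bounds
`(v / 2x) φ(x) ≤ ℙ(N(0,v) ≥ x) ≤ (v / x) φ(x)` (the first for `x ≥ √v`) bound the tail at `u`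
by `2 (w / u) φ(u) / φ(w)` times the tail at `w`; the exponents collapse to the power of `ε'_n`,
and `w ≤ nβ_c` is exactly what makes `w / u` at most the reciprocal of the denominator.
-/

open MeasureTheory ProbabilityTheory Filter Real Set
open scoped NNReal

namespace ProbabilityTheory

variable {μ : ℝ} {v : ℝ≥0}

lemma hasDerivAt_gaussianPDFReal (μ : ℝ) (v : ℝ≥0) (x : ℝ) :
    HasDerivAt (gaussianPDFReal μ v) (-(x - μ) / v * gaussianPDFReal μ v x) x := by
  have hexponent : HasDerivAt (fun y ↦ -(y - μ) ^ 2 / (2 * v)) (-(x - μ) / v) x :=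
    ((((hasDerivAt_id x).sub_const μ).pow 2).neg.div_const _).congr_deriv <| by
      simp only [id, Nat.cast_ofNat, Nat.add_one_sub_one, pow_one, mul_one]
      ring
  rw [gaussianPDFReal_def]
  exact (hexponent.exp.const_mul _).congr_deriv (by ring)

lemma gaussianPDFReal_mul_exp_mul (μ : ℝ) (hv : v ≠ 0) (t x : ℝ) :
    gaussianPDFReal μ v x * exp (t * x) =
      exp (μ * t + v * t ^ 2 / 2) * gaussianPDFReal (μ + v * t) v x := by
  have hv' : (v : ℝ) ≠ 0 := NNReal.coe_ne_zero.mpr hv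
  simp only [gaussianPDFReal]
  rw [mul_left_comm, mul_assoc, ← exp_add, ← exp_add]
  congr 2
  field_simp
  ring

lemma setIntegral_exp_mul_gaussianReal (hv : v ≠ 0) (t : ℝ) {s : Set ℝ} (hs : MeasurableSet s) :
    ∫ x in s, exp (t * x) ∂gaussianReal μ v =
      exp (μ * t + v * t ^ 2 / 2) * (gaussianReal (μ + v * t) v).real s := by
  rw [← integral_indicator hs, integral_gaussianReal_eq_integral_smul hv, measureReal_def,
    gaussianReal_apply_eq_integral _ hv,
    ENNReal.toReal_ofReal (setIntegral_nonneg hs fun x _ ↦ gaussianPDFReal_nonneg _ _ x),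
    ← integral_const_mul, ← integral_indicator hs]
  congr 1 with x
  by_cases hx : x ∈ s <;> simp [hx, gaussianPDFReal_mul_exp_mul μ hv]

lemma gaussianReal_real_Ici (μ a : ℝ) :
    (gaussianReal μ v).real (Ici a) = (gaussianReal 0 v).real (Ici (a - μ)) := by
  rw [← zero_add μ, ← gaussianReal_map_add_const,
    map_measureReal_apply (measurable_add_const μ) measurableSet_Ici]
  congr 1 with x
  simp

lemma gaussianReal_real_Iic_neg (a : ℝ) :
    (gaussianReal 0 v).real (Iic (-a)) = (gaussianReal 0 v).real (Ici a) := by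
  conv_lhs => rw [← neg_zero, ← gaussianReal_map_neg]
  rw [map_measureReal_apply measurable_neg measurableSet_Iic]
  congr 1 with x
  simp

lemma gaussianReal_real_Ici_eq_integral (hv : v ≠ 0) (a : ℝ) :
    (gaussianReal 0 v).real (Ici a) = ∫ x in Ioi a, gaussianPDFReal 0 v x := by
  rw [measureReal_def, gaussianReal_apply_eq_integral _ hv, integral_Ici_eq_integral_Ioi,
    ENNReal.toReal_ofReal (setIntegral_nonneg measurableSet_Ioi fun x _ ↦
      gaussianPDFReal_nonneg _ _ x)]

lemma integrableOn_one_add_div_sq_mul_gaussianPDFReal {u : ℝ} (hu : 0 < u) :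
    IntegrableOn (fun x ↦ (1 + v / x ^ 2) * gaussianPDFReal 0 v x) (Ioi u) := by
  refine (integrable_gaussianPDFReal 0 v).integrableOn.bdd_mul (c := 1 + v / u ^ 2)
    (by fun_prop : Measurable fun x : ℝ ↦ 1 + v / x ^ 2).aestronglyMeasurable ?_
  filter_upwards [ae_restrict_mem measurableSet_Ioi] with x (hx : u < x)
  rw [Real.norm_of_nonneg (by positivity)]
  gcongr

/-- Mills-ratio identity: `-(v / x) φ(x)` is an antiderivative of `(1 + v / x²) φ(x)`. -/
lemma integral_Ioi_one_add_div_sq_mul_gaussianPDFReal (hv : v ≠ 0) {u : ℝ} (hu : 0 < u) :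
    ∫ x in Ioi u, (1 + v / x ^ 2) * gaussianPDFReal 0 v x = v / u * gaussianPDFReal 0 v u := by
  have hv' : (v : ℝ) ≠ 0 := NNReal.coe_ne_zero.mpr hv
  have hderiv : ∀ x ∈ Ici u, HasDerivAt (fun x ↦ -(v / x * gaussianPDFReal 0 v x))
      ((1 + v / x ^ 2) * gaussianPDFReal 0 v x) x := by
    intro x (hx : u ≤ x)
    have hx0 : x ≠ 0 := (hu.trans_le hx).ne'
    refine (((hasDerivAt_const x (v : ℝ)).div (hasDerivAt_id x) hx0).mul
      (hasDerivAt_gaussianPDFReal 0 v x)).neg.congr_deriv ?_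
    simp only [Pi.div_apply, id]
    field_simp
    ring
  have hlim : Tendsto (fun x ↦ -(v / x * gaussianPDFReal 0 v x)) atTop (nhds 0) := by
    have hbound : ∀ x, gaussianPDFReal 0 v x ≤ (√(2 * π * v))⁻¹ := fun x ↦ by
      rw [gaussianPDFReal, neg_div]
      exact mul_le_of_le_one_right (by positivity) (exp_le_one_iff.mpr
        (neg_nonpos.mpr (by positivity)))
    have hdecay : Tendsto (fun x : ℝ ↦ v / x * (√(2 * π * v))⁻¹) atTop (nhds 0) := by
      simpa using (tendsto_const_nhds.div_atTop tendsto_id).mul_const (√(2 * π * v))⁻¹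
    have h := squeeze_zero' ((eventually_gt_atTop 0).mono fun x hx ↦
      mul_nonneg (div_nonneg v.2 hx.le) (gaussianPDFReal_nonneg 0 v x))
      ((eventually_gt_atTop 0).mono fun x hx ↦
        mul_le_mul_of_nonneg_left (hbound x) (div_nonneg v.2 hx.le)) hdecay
    simpa using h.neg
  rw [integral_Ioi_of_hasDerivAt_of_tendsto' hderiv
    (integrableOn_one_add_div_sq_mul_gaussianPDFReal hu) hlim]
  ring

lemma gaussianReal_real_Ici_le (hv : v ≠ 0) {u : ℝ} (hu : 0 < u) :
    (gaussianReal 0 v).real (Ici u) ≤ v / u * gaussianPDFReal 0 v u := by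
  rw [gaussianReal_real_Ici_eq_integral hv, ← integral_Ioi_one_add_div_sq_mul_gaussianPDFReal hv hu]
  refine setIntegral_mono_on (integrable_gaussianPDFReal 0 v).integrableOn
    (integrableOn_one_add_div_sq_mul_gaussianPDFReal hu) measurableSet_Ioi fun x _ ↦ ?_
  exact le_mul_of_one_le_left (gaussianPDFReal_nonneg 0 v x)
    (le_add_of_nonneg_right (by positivity))

lemma gaussianPDFReal_le_gaussianReal_real_Ici (hv : v ≠ 0) {u : ℝ} (hu : √v ≤ u) :
    gaussianPDFReal 0 v u ≤ 2 * u / v * (gaussianReal 0 v).real (Ici u) := by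
  have hv' : (0 : ℝ) < v := by positivity
  have hu0 : 0 < u := (sqrt_pos.mpr hv').trans_le hu
  have hvu : v / u ^ 2 ≤ 1 := by
    rw [div_le_one (by positivity), ← sq_sqrt hv'.le]
    gcongr
  have hmills : v / u * gaussianPDFReal 0 v u ≤ 2 * (gaussianReal 0 v).real (Ici u) := calc
    v / u * gaussianPDFReal 0 v u = ∫ x in Ioi u, (1 + v / x ^ 2) * gaussianPDFReal 0 v x :=
      (integral_Ioi_one_add_div_sq_mul_gaussianPDFReal hv hu0).symm
    _ ≤ ∫ x in Ioi u, 2 * gaussianPDFReal 0 v x := by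
      refine setIntegral_mono_on (integrableOn_one_add_div_sq_mul_gaussianPDFReal hu0)
        ((integrable_gaussianPDFReal 0 v).integrableOn.const_mul 2) measurableSet_Ioi
        fun x (hx : u < x) ↦ mul_le_mul_of_nonneg_right ?_ (gaussianPDFReal_nonneg 0 v x)
      have : v / x ^ 2 ≤ v / u ^ 2 := by gcongr
      linarith
    _ = 2 * (gaussianReal 0 v).real (Ici u) := by
      rw [integral_const_mul, gaussianReal_real_Ici_eq_integral hv]
  rw [div_mul_eq_mul_div, le_div_iff₀ hv']
  rw [div_mul_eq_mul_div, div_le_iff₀ hu0] at hmills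
  linarith

lemma gaussianPDFReal_zero_eq_exp_mul (v : ℝ≥0) (u w : ℝ) :
    gaussianPDFReal 0 v u = exp ((w ^ 2 - u ^ 2) / (2 * v)) * gaussianPDFReal 0 v w := by
  simp only [gaussianPDFReal, sub_zero]
  rw [mul_left_comm, ← exp_add]
  ring_nf

lemma gaussianReal_real_Ici_le_mul (hv : v ≠ 0) {u w : ℝ} (hu : 0 < u) (hw : √v ≤ w) :
    (gaussianReal 0 v).real (Ici u) ≤
      2 * (w / u) * exp ((w ^ 2 - u ^ 2) / (2 * v)) * (gaussianReal 0 v).real (Ici w) := by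
  have hv' : (0 : ℝ) < v := by positivity
  calc (gaussianReal 0 v).real (Ici u)
      ≤ v / u * (exp ((w ^ 2 - u ^ 2) / (2 * v)) * gaussianPDFReal 0 v w) := by
        rw [← gaussianPDFReal_zero_eq_exp_mul]
        exact gaussianReal_real_Ici_le hv hu
    _ ≤ v / u * (exp ((w ^ 2 - u ^ 2) / (2 * v)) *
          (2 * w / v * (gaussianReal 0 v).real (Ici w))) := by
        gcongr
        exact gaussianPDFReal_le_gaussianReal_real_Ici hv hw
    _ = 2 * (w / u) * exp ((w ^ 2 - u ^ 2) / (2 * v)) * (gaussianReal 0 v).real (Ici w) := by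
        field_simp

lemma gaussianReal_real_Ici_sqrt_mul (hv : v ≠ 0) (t : ℝ) :
    (gaussianReal 0 v).real (Ici (√v * t)) = (gaussianReal 0 1).real (Ici t) := by
  have hscale : (gaussianReal 0 1).map (√v * ·) = gaussianReal 0 v := by
    rw [gaussianReal_map_const_mul, mul_zero, mul_one]
    congr
    exact sq_sqrt v.2
  have hsqrt : 0 < √(v : ℝ) := sqrt_pos.mpr (by positivity)
  rw [← hscale, map_measureReal_apply (measurable_const_mul _) measurableSet_Ici]
  congr 1 with x
  simp [mul_le_mul_iff_right₀ hsqrt]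

lemma gaussianReal_real_Ici_pos (hv : v ≠ 0) (a : ℝ) : 0 < (gaussianReal μ v).real (Ici a) := by
  refine ENNReal.toReal_pos (fun h ↦ ?_) (measure_ne_top _ _)
  have := gaussianReal_absolutelyContinuous' μ hv h
  simp at this

lemma sqrt_le_of_gaussianReal_real_Ici_lt (hv : v ≠ 0) {w : ℝ}
    (h : (gaussianReal 0 v).real (Ici w) < (gaussianReal 0 1).real (Ici 1)) : √v ≤ w := by
  by_contra! hw
  rw [← gaussianReal_real_Ici_sqrt_mul hv, mul_one] at h
  exact h.not_ge (measureReal_mono (Ici_subset_Ici.mpr hw.le))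

lemma le_of_exp_le_gaussianReal_real_Ici (hv : v ≠ 0) {m w : ℝ} (hm : 0 < m)
    (hvm : v < 2 * π * m ^ 2) (h : exp (-m ^ 2 / (2 * v)) ≤ (gaussianReal 0 v).real (Ici w)) :
    w ≤ m := by
  by_contra! hw
  have hv' : (0 : ℝ) < v := by positivity
  have hratio : v / m * (√(2 * π * v))⁻¹ < 1 := by
    rw [← div_eq_mul_inv, div_lt_one (by positivity), lt_sqrt (by positivity), div_pow,
      div_lt_iff₀ (by positivity)]
    nlinarith
  have := calc (gaussianReal 0 v).real (Ici w)
      ≤ (gaussianReal 0 v).real (Ici m) := measureReal_mono (Ici_subset_Ici.mpr hw.le)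
    _ ≤ v / m * gaussianPDFReal 0 v m := gaussianReal_real_Ici_le hv hm
    _ = v / m * (√(2 * π * v))⁻¹ * exp (-m ^ 2 / (2 * v)) := by
      rw [gaussianPDFReal, sub_zero]
      ring
    _ < exp (-m ^ 2 / (2 * v)) := mul_lt_of_lt_one_left (exp_pos _) hratio
  linarith

end ProbabilityTheory

section GaussianVariable

variable {Ω : Type*} [MeasurableSpace Ω] {P : Measure Ω} {X : Ω → ℝ} {v : ℝ≥0}

lemma measureReal_setOf_le_exp_neg_mul (hX : Measurable X) (hlaw : P.map X = gaussianReal 0 v)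
    {β c : ℝ} (hβ : 0 < β) (hc : 0 < c) :
    P.real {ω | c ≤ exp (-β * X ω)} = (gaussianReal 0 v).real (Ici (log c / β)) := by
  have hset : {ω | c ≤ exp (-β * X ω)} = X ⁻¹' Iic (-(log c / β)) := by
    ext ω
    rw [mem_ofPred_eq, ← log_le_iff_le_exp hc, mem_preimage, mem_Iic, le_neg, div_le_iff₀ hβ]
    constructor <;> intro h <;> linarith
  rw [hset, ← map_measureReal_apply hX measurableSet_Iic, hlaw, gaussianReal_real_Iic_neg]

lemma integral_ite_sq_exp_eq (hX : Measurable X) (hlaw : P.map X = gaussianReal 0 v)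
    (hv : v ≠ 0) {β c e : ℝ} (hβ : 0 < β) (hc : 0 < c) (he : 0 < e) (A : ℝ) :
    ∫ ω, (if c⁻¹ * exp (-β * X ω) ≤ e then (A * (c⁻¹ * exp (-β * X ω))) ^ 2 else 0) ∂P =
      (A / c) ^ 2 * exp (2 * β ^ 2 * v) *
        (gaussianReal 0 v).real (Ici (2 * β * v - (log c + log e) / β)) := by
  have hindicator : (fun y ↦ if c⁻¹ * exp (-β * y) ≤ e then (A * (c⁻¹ * exp (-β * y))) ^ 2 else 0)
      = (Ici (-(log c + log e) / β)).indicator fun y ↦ (A / c) ^ 2 * exp (-2 * β * y) := by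
    ext y
    have hcond : c⁻¹ * exp (-β * y) ≤ e ↔ -(log c + log e) / β ≤ y := by
      rw [inv_mul_le_iff₀ hc, ← exp_log (mul_pos hc he), exp_le_exp, log_mul hc.ne' he.ne',
        div_le_iff₀ hβ]
      constructor <;> intro h <;> linarith
    have hsq : exp (-2 * β * y) = exp (-β * y) ^ 2 := by
      rw [sq, ← exp_add]
      ring_nf
    simp only [indicator, mem_Ici, hcond, hsq]
    split_ifs <;> ring
  rw [← integral_map (f := fun y ↦ if c⁻¹ * exp (-β * y) ≤ e then
      (A * (c⁻¹ * exp (-β * y))) ^ 2 else 0) hX.aemeasurable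
      (Measurable.ite (measurableSet_le (by fun_prop) measurable_const) (by fun_prop)
        measurable_const).aestronglyMeasurable,
    hlaw, hindicator, integral_indicator measurableSet_Ici, integral_const_mul,
    setIntegral_exp_mul_gaussianReal hv _ measurableSet_Ici, gaussianReal_real_Ici]
  rw [mul_assoc ((A / c) ^ 2),
    show (0 : ℝ) * (-2 * β) + v * (-2 * β) ^ 2 / 2 = 2 * β ^ 2 * v by ring,
    show -(log c + log e) / β - (0 + v * (-2 * β)) = 2 * β * v - (log c + log e) / β by ring]

lemma integral_ite_sq_exp_le (hX : Measurable X) (hlaw : P.map X = gaussianReal 0 v)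
    (hv : v ≠ 0) {A β b c e : ℝ} (hA : 0 < A) (hβ : 0 < β) (hb : 0 < b) (hc : 0 < c) (he : 0 < e)
    (htail : (gaussianReal 0 v).real (Ici (log c / β)) = A⁻¹)
    (hsqrt : √v ≤ log c / β) (hcb : log c / β ≤ v * b)
    (hD : 0 < 2 * β / b - 1 - log e / (v * β * b)) :
    ∫ ω, (if c⁻¹ * exp (-β * X ω) ≤ e then (A * (c⁻¹ * exp (-β * X ω))) ^ 2 else 0) ∂P ≤
      2 * A * e ^ (2 - log c / (v * β ^ 2) - log e / (2 * v * β ^ 2)) /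
        (2 * β / b - 1 - log e / (v * β * b)) := by
  have hv' : (0 : ℝ) < v := by positivity
  set L := log c
  set l := log e
  set D := 2 * β / b - 1 - l / (v * β * b)
  set w := L / β
  set u := 2 * β * v - (L + l) / β
  have hw : 0 < w := (sqrt_pos.mpr hv').trans_le hsqrt
  have hwu : w * D ≤ u := by
    have key : u - w * D = (v * b - w) * (1 + D) := by
      simp only [u, w, D]
      field_simp
      ring
    nlinarith
  have hu : 0 < u := (mul_pos hw hD).trans_le hwu
  have hexponent : -2 * L + 2 * β ^ 2 * v + (w ^ 2 - u ^ 2) / (2 * v) =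
      l * (2 - L / (v * β ^ 2) - l / (2 * v * β ^ 2)) := by
    simp only [u, w]
    field_simp
    ring
  calc _ = (A / c) ^ 2 * exp (2 * β ^ 2 * v) * (gaussianReal 0 v).real (Ici u) :=
        integral_ite_sq_exp_eq hX hlaw hv hβ hc he A
    _ ≤ (A / c) ^ 2 * exp (2 * β ^ 2 * v) *
          (2 * (w / u) * exp ((w ^ 2 - u ^ 2) / (2 * v)) * (gaussianReal 0 v).real (Ici w)) := by
        gcongr
        exact gaussianReal_real_Ici_le_mul hv hu hsqrt
    _ = 2 * A * e ^ (2 - L / (v * β ^ 2) - l / (2 * v * β ^ 2)) * (w / u) := by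
        rw [htail, rpow_def_of_pos he, ← hexponent, exp_add, exp_add,
          show -2 * L = -L + -L by ring, exp_add, exp_neg, ← exp_log hc]
        field_simp
        rfl
    _ ≤ 2 * A * e ^ (2 - L / (v * β ^ 2) - l / (2 * v * β ^ 2)) / D := by
        rw [div_eq_mul_one_div _ D]
        refine mul_le_mul_of_nonneg_left ?_ (by positivity)
        rw [div_le_div_iff₀ hu hD]
        linarith

end GaussianVariable

theorem truncated_second_moment_bound_general
    {Ω : Type*} [MeasurableSpace Ω] (P : Measure Ω)
    (H : (n : ℕ) → (Fin n → Bool) → Ω → ℝ)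
    (hmeas : ∀ n x, Measurable (H n x))
    (hgauss : ∀ n x, Measure.map (H n x) P = gaussianReal 0 n)
    (β : ℝ) (hβ : 0 < β)
    (ε : ℝ) (hε0 : 0 < ε)
    (c : ℕ → ℝ)
    (hc : ∀ n, 1 ≤ n → ∀ x : Fin n → Bool, 0 < c n ∧
      (2 : ℝ) ^ (ε * n) * (P {ω | c n ≤ Real.exp (-β * H n x ω)}).toReal = 1) :
    ∃ K' : ℝ, ∀ εp : ℕ → ℝ, (∀ n, 0 < εp n) →
      (∀ n, 1 ≤ n → 0 < 2 * β / Real.sqrt (2 * ε * Real.log 2) - 1 -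
          Real.log (εp n) / (n * β * Real.sqrt (2 * ε * Real.log 2))) →
      ∀ᶠ n : ℕ in atTop, ∀ x : Fin n → Bool,
        (∫ ω, (if (c n)⁻¹ * Real.exp (-β * H n x ω) ≤ εp n then
            ((2 : ℝ) ^ (ε * n) * ((c n)⁻¹ * Real.exp (-β * H n x ω))) ^ 2 else 0) ∂P)
          ≤ K' * (2 : ℝ) ^ (ε * n) *
              (εp n) ^ (2 - Real.log (c n) / (n * β ^ 2) -
                Real.log (εp n) / (2 * n * β ^ 2)) /
              (2 * β / Real.sqrt (2 * ε * Real.log 2) - 1 -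
                Real.log (εp n) / (n * β * Real.sqrt (2 * ε * Real.log 2))) := by
  set βc := √(2 * ε * log 2)
  have hβc_sq : βc ^ 2 = 2 * ε * log 2 := sq_sqrt (by positivity)
  have hβc : 0 < βc := sqrt_pos.mpr (by positivity)
  refine ⟨2, fun εp hεp hD ↦ ?_⟩
  have hlarge : ∀ᶠ n : ℕ in atTop, 1 < 2 * π * βc ^ 2 * n :=
    ((tendsto_natCast_atTop_atTop).const_mul_atTop (by positivity)).eventually_gt_atTop 1
  have hsmall : ∀ᶠ n : ℕ in atTop, ((2 : ℝ) ^ (ε * n))⁻¹ < (gaussianReal 0 1).real (Ici 1) :=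
    ((tendsto_rpow_atTop_of_base_gt_one 2 one_lt_two).comp
      ((tendsto_natCast_atTop_atTop).const_mul_atTop hε0)).inv_tendsto_atTop.eventually
      (gt_mem_nhds (gaussianReal_real_Ici_pos one_ne_zero 1))
  filter_upwards [eventually_ge_atTop 1, hlarge, hsmall] with n hn hlarge hsmall x
  obtain ⟨hc0, hceq⟩ := hc n hn x
  have hn0 : (n : ℝ≥0) ≠ 0 := Nat.cast_ne_zero.mpr (by omega)
  have htail : (gaussianReal 0 n).real (Ici (log (c n) / β)) = ((2 : ℝ) ^ (ε * n))⁻¹ := by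
    rw [← measureReal_setOf_le_exp_neg_mul (hmeas n x) (hgauss n x) hβ hc0]
    exact eq_inv_of_mul_eq_one_right hceq
  have hexp : exp (-(n * βc) ^ 2 / (2 * (n : ℝ≥0))) = ((2 : ℝ) ^ (ε * n))⁻¹ := by
    rw [rpow_def_of_pos two_pos, ← exp_neg, NNReal.coe_natCast, mul_pow, hβc_sq]
    field_simp
  have hcb : log (c n) / β ≤ n * βc := by
    refine le_of_exp_le_gaussianReal_real_Ici hn0 (by positivity) ?_ (hexp.trans htail.symm).le
    rw [NNReal.coe_natCast]
    nlinarith [mul_lt_mul_of_pos_left hlarge (by positivity : (0 : ℝ) < n)]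
  have := integral_ite_sq_exp_le (hmeas n x) (hgauss n x) hn0 (by positivity) hβ hβc hc0
    (hεp n) htail (sqrt_le_of_gaussianReal_real_Ici_lt hn0 (htail ▸ hsmall))
    (by simpa using hcb) (by simpa using hD n hn)
  simpa using this

theorem truncated_second_moment_bound
    {Ω : Type*} [MeasurableSpace Ω] (P : Measure Ω) [IsProbabilityMeasure P]
    (H : (n : ℕ) → (Fin n → Bool) → Ω → ℝ)
    (hmeas : ∀ n x, Measurable (H n x))
    (hgauss : ∀ n x, Measure.map (H n x) P = gaussianReal 0 n)
    (hindep : iIndepFun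
      (fun p : (Σ n : ℕ, (Fin n → Bool)) => H p.1 p.2) P)
    (β : ℝ) (hβ : 0 < β)
    (ε : ℝ) (hε0 : 0 < ε) (hε1 : ε < 1)
    (c : ℕ → ℝ)
    (hc : ∀ n, 1 ≤ n → ∀ x : Fin n → Bool, 0 < c n ∧
      (2 : ℝ) ^ (ε * n) * (P {ω | c n ≤ Real.exp (-β * H n x ω)}).toReal = 1) :
    ∃ K' : ℝ, ∀ εp : ℕ → ℝ, (∀ n, 0 < εp n) →
      (∀ n, 1 ≤ n → 0 < 2 * β / Real.sqrt (2 * ε * Real.log 2) - 1 -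
          Real.log (εp n) / (n * β * Real.sqrt (2 * ε * Real.log 2))) →
      ∀ᶠ n : ℕ in atTop, ∀ x : Fin n → Bool,
        (∫ ω, (if (c n)⁻¹ * Real.exp (-β * H n x ω) ≤ εp n then
            ((2 : ℝ) ^ (ε * n) * ((c n)⁻¹ * Real.exp (-β * H n x ω))) ^ 2 else 0) ∂P)
          ≤ K' * (2 : ℝ) ^ (ε * n) *
              (εp n) ^ (2 - Real.log (c n) / (n * β ^ 2) -
                Real.log (εp n) / (2 * n * β ^ 2)) /
              (2 * β / Real.sqrt (2 * ε * Real.log 2) - 1 -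
                Real.log (εp n) / (n * β * Real.sqrt (2 * ε * Real.log 2))) :=
  truncated_second_moment_bound_general P H hmeas hgauss β hβ ε hε0 c hc
end
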